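/- arXiv:2009.14648 — 5 statements merged into one kernel-verified Lean document; each statement's English description precedes it below -/
import Mathlib

section
/- Let β, γ > 0 with β/γ > 1, S_herd := γ/β, and let S₀, I₀ satisfy S_herd < S₀ < 1, I₀ ≥ 0 and S₀ + I₀ ≤ 1. Then the quantity ᾱ := (S_herd/(S₀ + I₀ - S_herd))·(ln S₀ - ln S_herd) satisfies 0 < ᾱ < 1. -/
noncomputable section

open MeasureTheory Filter Set Real

/-- `(S, I)` solves the controlled SIR system with control `u`, parameters `β, γ` and
initial data `(S₀, I₀)`, in integral (Carathéodory) form on `[0, ∞)`. -/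
def IsSol (β γ : ℝ) (u : ℝ → ℝ) (S₀ I₀ : ℝ) (S I : ℝ → ℝ) : Prop :=
  S 0 = S₀ ∧ I 0 = I₀ ∧
  ContinuousOn S (Set.Ici 0) ∧ ContinuousOn I (Set.Ici 0) ∧
  (∀ t, 0 ≤ t → S t = S₀ - ∫ s in (0:ℝ)..t, u s * β * S s * I s) ∧
  (∀ t, 0 ≤ t → I t = I₀ + ∫ s in (0:ℝ)..t, (u s * β * S s * I s - γ * I s))

/-- The admissible control set `U_{α,T,T'}`: measurable controls with values in `[α,1]`
a.e. on `[T,T']` and equal to `1` a.e. outside `[T,T']`. -/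
def IsAdmissible (α T T' : ℝ) (u : ℝ → ℝ) : Prop :=
  Measurable u ∧
  (∀ᵐ t : ℝ ∂volume, t ∈ Set.Icc T T' → α ≤ u t ∧ u t ≤ 1) ∧
  (∀ᵐ t : ℝ ∂volume, t ∉ Set.Icc T T' → u t = 1)

/-- The bang-bang control `u_{T,T'}`, equal to `α` on `[T,T']` and `1` elsewhere. -/
def ubb (α T T' : ℝ) : ℝ → ℝ := fun t => if t ∈ Set.Icc T T' then α else 1

/-- The epidemic final size functional `S_∞(u)`: the limit of `S(t)` as `t → ∞` along the
solution associated with `u` (encoded as the supremum of all such limits;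
by well-posedness of the system there is exactly one). -/
def Sinf (β γ S₀ I₀ : ℝ) (u : ℝ → ℝ) : ℝ :=
  sSup {x | ∃ S I : ℝ → ℝ, IsSol β γ u S₀ I₀ S I ∧ Tendsto S atTop (nhds x)}

/-- The value function `S_∞*(α, D) = sup_{T ≥ 0} sup_{u ∈ U_{α,T,T+D}} S_∞(u)`. -/
def SIRValue (β γ S₀ I₀ α D : ℝ) : ℝ :=
  sSup {x | ∃ T, 0 ≤ T ∧ ∃ u, IsAdmissible α T (T + D) u ∧ x = Sinf β γ S₀ I₀ u}

/-- `Φ_R(S, I) = S + I - (1/R)·ln S`. -/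
def Phi (R S I : ℝ) : ℝ := S + I - (1 / R) * Real.log S

/-- `Φ_{R₀}` evaluated at time `t` along the solution associated with control `u`. -/
def PhiAt (β γ S₀ I₀ t : ℝ) (u : ℝ → ℝ) : ℝ :=
  sSup {x | ∃ S I : ℝ → ℝ, IsSol β γ u S₀ I₀ S I ∧ x = Phi (β / γ) (S t) (I t)}

/-- The function `ψ` from the paper, built from the family `T ↦ (S^T, I^T)` of solutions
associated with the bang-bang controls `u_{T,T+D}`:
`ψ(T) = -I^T(T+D)/I^T(T) + (α-1)·γ·∫_T^{T+D} I^T(T+D)/I^T(t) dt + 1`. -/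
def psi (γ α D : ℝ) (ST IT : ℝ → ℝ → ℝ) (T : ℝ) : ℝ :=
  -(IT T (T + D) / IT T T) +
    (α - 1) * γ * (∫ t in T..(T + D), IT T (T + D) / IT T t) + 1

/-- Let `β, γ > 0` with `β/γ > 1`, `S_herd := γ/β`, and let `S₀, I₀` satisfy
`S_herd < S₀ < 1`, `I₀ ≥ 0` and `S₀ + I₀ ≤ 1`. Then
`ᾱ := (S_herd/(S₀ + I₀ - S_herd))·(ln S₀ - ln S_herd)` satisfies `0 < ᾱ < 1`. -/
theorem sir_critical_alpha_mem_Ioo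
    (β γ S₀ I₀ : ℝ)
    (hβ : 0 < β) (hγ : 0 < γ) (hR₀ : 1 < β / γ)
    (hS₀herd : γ / β < S₀) (hS₀1 : S₀ < 1) (hI₀ : 0 ≤ I₀) (hSI : S₀ + I₀ ≤ 1) :
    0 < (γ / β) / (S₀ + I₀ - γ / β) * (Real.log S₀ - Real.log (γ / β)) ∧
    (γ / β) / (S₀ + I₀ - γ / β) * (Real.log S₀ - Real.log (γ / β)) < 1 := by
  have hh : 0 < γ / β := div_pos hγ hβ
  have hS₀pos : 0 < S₀ := lt_trans hh hS₀herd
  have hden : 0 < S₀ + I₀ - γ / β := by linarith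
  have hlogpos : 0 < Real.log S₀ - Real.log (γ / β) := by
    have := Real.log_lt_log hh hS₀herd
    linarith
  constructor
  · exact mul_pos (div_pos hh hden) hlogpos
  · rw [div_mul_eq_mul_div, div_lt_one hden]
    have hx : (0:ℝ) < S₀ / (γ / β) := div_pos hS₀pos hh
    have hne : S₀ / (γ / β) ≠ 1 := by
      intro h
      rw [div_eq_one_iff_eq (ne_of_gt hh)] at h
      linarith
    have hlt := Real.log_lt_sub_one_of_pos hx hne
    rw [Real.log_div (ne_of_gt hS₀pos) (ne_of_gt hh)] at hlt
    have h2 : (γ / β) * (Real.log S₀ - Real.log (γ / β)) < (γ / β) * (S₀ / (γ / β) - 1) :=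
      by exact mul_lt_mul_of_pos_left hlt hh
    have h3 : (γ / β) * (S₀ / (γ / β) - 1) = S₀ - γ / β := by
      field_simp
    linarith
end
end

section
/- Let 0 ≤ T < T', α ∈ [0,1) and u ∈ U_{α,T,T'}, and let (S,I) be the corresponding solution of the controlled SIR model. Then S(t) converges as t → ∞ to a limit S_∞(u), and S_∞(u) is the unique solution x in the interval [0, S_herd] of the equation Φ_{R₀}(x, 0) = Φ_{R₀}(S(T'), I(T')). -/
noncomputable section

open MeasureTheory Filter Set Real

lemma intervalIntegrable_of_ae_bounded' {f : ℝ → ℝ} {a b M : ℝ}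
    (hm : AEStronglyMeasurable f (volume.restrict (Set.uIoc a b)))
    (hb : ∀ᵐ s ∂(volume.restrict (Set.uIoc a b)), ‖f s‖ ≤ M) :
    IntervalIntegrable f volume a b := by
  rw [intervalIntegrable_iff]
  exact ⟨hm, HasFiniteIntegral.restrict_of_bounded M measure_Ioc_lt_top hb⟩

lemma tendsto_of_monotoneOn_bddAbove' {f : ℝ → ℝ} {c : ℝ}
    (hm : ∀ x ∈ Ici c, ∀ y ∈ Ici c, x ≤ y → f x ≤ f y)
    (hb : BddAbove (f '' Ici c)) : ∃ x, Tendsto f atTop (nhds x) := by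
  set g : ℝ → ℝ := fun t => f (max t c) with hg
  have hgm : Monotone g := fun x y hxy => hm _ (mem_Ici.2 (le_max_right _ _)) _ (mem_Ici.2 (le_max_right _ _))
    (max_le_max hxy le_rfl)
  have hgb : BddAbove (range g) := by
    refine hb.mono ?_
    rintro _ ⟨t, rfl⟩
    exact ⟨max t c, mem_Ici.2 (le_max_right _ _), rfl⟩
  refine ⟨_, (tendsto_atTop_ciSup hgm hgb).congr' ?_⟩
  filter_upwards [eventually_ge_atTop c] with t ht
  simp [hg, max_eq_left ht]

/-- Positivity persistence for linear integral equations with bounded measurable coefficient. -/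
lemma persistence {f a : ℝ → ℝ} {b M : ℝ} (hM : 0 ≤ M)
    (hf : ContinuousOn f (Icc 0 b)) (hf0 : 0 < f 0)
    (hint : ∀ t₁ ∈ Icc (0:ℝ) b, ∀ t₂ ∈ Icc (0:ℝ) b,
      IntervalIntegrable (fun s => a s * f s) volume t₁ t₂)
    (hae : ∀ᵐ s : ℝ, s ∈ Icc 0 b → |a s| ≤ M)
    (heq : ∀ t ∈ Icc (0:ℝ) b, f t = f 0 + ∫ s in (0:ℝ)..t, a s * f s) :
    ∀ t ∈ Icc (0:ℝ) b, 0 < f t := by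
  by_contra hcon
  push_neg at hcon
  obtain ⟨t₀, ht₀, ht₀f⟩ := hcon
  set E : Set ℝ := Icc 0 b ∩ f ⁻¹' (Iic 0) with hE
  have hEne : E.Nonempty := ⟨t₀, ht₀, ht₀f⟩
  have hEc : IsClosed E := hf.preimage_isClosed_of_isClosed isClosed_Icc isClosed_Iic
  have hEbdd : BddBelow E := ⟨0, fun x hx => hx.1.1⟩
  set τ := sInf E with hτ
  have hτE : τ ∈ E := hEc.csInf_mem hEne hEbdd
  have hτIcc : τ ∈ Icc 0 b := hτE.1
  have hτf : f τ ≤ 0 := hτE.2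
  have hτpos : 0 < τ := by
    rcases eq_or_lt_of_le hτIcc.1 with h | h
    · exact absurd (h ▸ hτf) (not_le.2 hf0)
    · exact h
  have hlt : ∀ s, 0 ≤ s → s < τ → 0 < f s := by
    intro s hs hsτ
    by_contra hfs
    exact absurd (csInf_le hEbdd ⟨⟨hs, hsτ.le.trans hτIcc.2⟩, not_lt.1 hfs⟩) (not_le.2 hsτ)
  set ε := min τ (1/(4*(M+1))) with hε
  have hεpos : 0 < ε := lt_min hτpos (by positivity)
  set c := τ - ε with hc
  have hcτ : c < τ := by simp [hc, hεpos]
  have hc0 : 0 ≤ c := by simp [hc]; exact min_le_left _ _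
  have hcIcc : c ∈ Icc 0 b := ⟨hc0, hcτ.le.trans hτIcc.2⟩
  have hfc : 0 < f c := hlt c hc0 hcτ
  -- equation with base point c
  have heqc : ∀ t ∈ Icc c τ, f t - f c = ∫ s in c..t, a s * f s := by
    intro t ht
    have htIcc : t ∈ Icc 0 b := ⟨hc0.trans ht.1, ht.2.trans hτIcc.2⟩
    have h0b : (0:ℝ) ∈ Icc (0:ℝ) b := ⟨le_refl 0, ht₀.1.trans ht₀.2⟩
    rw [heq t htIcc, heq c hcIcc]
    have h2 := intervalIntegral.integral_interval_sub_left (hint 0 h0b t htIcc) (hint 0 h0b c hcIcc)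
    linarith [h2]
  -- maximum of |f - f c| on [c, τ]
  have hKne : (Icc c τ).Nonempty := ⟨c, le_refl c, hcτ.le⟩
  have hgcont : ContinuousOn (fun t => |f t - f c|) (Icc c τ) :=
    ((hf.mono (Icc_subset_Icc hc0 hτIcc.2)).sub continuousOn_const).abs
  obtain ⟨ts, htsK, htsmax⟩ := isCompact_Icc.exists_isMaxOn hKne hgcont
  set δ := |f ts - f c| with hδ
  have hδ0 : 0 ≤ δ := abs_nonneg _
  have hmax : ∀ x ∈ Icc c τ, |f x - f c| ≤ δ := fun x hx => htsmax hx
  -- bound δ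
  have hδle : δ ≤ (1/4) * (f c + δ) := by
    have h1 : ‖∫ s in c..ts, a s * f s‖ ≤ (M * (f c + δ)) * |ts - c| := by
      apply intervalIntegral.norm_integral_le_of_norm_le_const_ae
      filter_upwards [hae] with x hx hxI
      have hxK : x ∈ Icc c τ := by
        rw [Set.uIoc_of_le htsK.1] at hxI
        exact ⟨hxI.1.le, hxI.2.trans htsK.2⟩
      have hxb : x ∈ Icc 0 b := ⟨hc0.trans hxK.1, hxK.2.trans hτIcc.2⟩
      have : |f x| ≤ f c + δ := by
        have := hmax x hxK
        have := abs_sub_abs_le_abs_sub (f x) (f c)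
        have hfc' : |f c| = f c := abs_of_pos hfc
        calc |f x| ≤ |f c| + |f x - f c| := by
              have := abs_sub (f x) (f c); nlinarith [abs_sub_abs_le_abs_sub (f x) (f c), hmax x hxK]
          _ ≤ f c + δ := by rw [hfc']; linarith [hmax x hxK]
      calc ‖a x * f x‖ = |a x| * |f x| := abs_mul _ _
        _ ≤ M * (f c + δ) := by
            apply mul_le_mul (hx hxb) this (abs_nonneg _) hM
    have h2 : |ts - c| ≤ ε := by
      rw [abs_of_nonneg (by linarith [htsK.1])]
      linarith [htsK.2, hcτ.le]
    have h3 : δ = ‖∫ s in c..ts, a s * f s‖ := by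
      rw [hδ, heqc ts htsK]; rfl
    have h4 : M * ε ≤ 1/4 := by
      have : ε ≤ 1/(4*(M+1)) := min_le_right _ _
      have h5 : M * ε ≤ M * (1/(4*(M+1))) := by
        apply mul_le_mul_of_nonneg_left this hM
      have h6 : M * (1/(4*(M+1))) ≤ 1/4 := by
        rw [show M * (1/(4*(M+1))) = M/(4*(M+1)) by ring,
          div_le_div_iff₀ (by positivity) (by norm_num : (0:ℝ) < 4)]
        nlinarith
      linarith
    calc δ = ‖∫ s in c..ts, a s * f s‖ := h3
      _ ≤ (M * (f c + δ)) * |ts - c| := h1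
      _ ≤ (M * (f c + δ)) * ε := by
          apply mul_le_mul_of_nonneg_left h2; positivity
      _ = (M * ε) * (f c + δ) := by ring
      _ ≤ (1/4) * (f c + δ) := by
          apply mul_le_mul_of_nonneg_right h4; linarith
  have hδfc : δ ≤ f c / 3 := by linarith
  have : 0 < f τ := by
    have := hmax τ ⟨hcτ.le, le_refl τ⟩
    have := abs_le.1 (hmax τ ⟨hcτ.le, le_refl τ⟩)
    linarith [this.1]
  linarith

set_option maxHeartbeats 2000000 in
/-- Let `0 ≤ T < T'`, `α ∈ [0,1)` and `u ∈ U_{α,T,T'}`, and let `(S,I)` be the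
corresponding solution of the controlled SIR model. Then `S(t)` converges as `t → ∞` to a
limit `S_∞(u)`, and `S_∞(u)` is the unique solution `x ∈ [0, S_herd]` of the equation
`Φ_{R₀}(x, 0) = Φ_{R₀}(S(T'), I(T'))`. -/
theorem sir_final_size_equation
    (β γ S₀ I₀ α T T' : ℝ) (u S I : ℝ → ℝ)
    (hβ : 0 < β) (hγ : 0 < γ) (hR₀ : 1 < β / γ)
    (hS₀ : 0 < S₀) (hI₀ : 0 < I₀) (hSI : S₀ + I₀ ≤ 1)
    (hα : 0 ≤ α) (hα1 : α < 1) (hT : 0 ≤ T) (hTT' : T < T')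
    (hu : IsAdmissible α T T' u)
    (hsol : IsSol β γ u S₀ I₀ S I) :
    ∃ x : ℝ, Tendsto S atTop (nhds x) ∧ x ∈ Set.Icc 0 (γ / β) ∧
      Phi (β / γ) x 0 = Phi (β / γ) (S T') (I T') ∧
      ∀ y ∈ Set.Icc (0 : ℝ) (γ / β),
        Phi (β / γ) y 0 = Phi (β / γ) (S T') (I T') → y = x := by
  obtain ⟨humeas, huTT, huout⟩ := hu
  obtain ⟨hS0, hI0, hScont, hIcont, hSeq, hIeq⟩ := hsol
  have hT'0 : 0 < T' := lt_of_le_of_lt hT hTT'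
  have hu01 : ∀ᵐ s : ℝ, 0 ≤ u s ∧ u s ≤ 1 := by
    filter_upwards [huTT, huout] with s h1 h2
    by_cases hs : s ∈ Icc T T'
    · exact ⟨hα.trans (h1 hs).1, (h1 hs).2⟩
    · rw [h2 hs]; norm_num
  -- generic interval integrability of u * g for g continuous on Ici 0
  have hii : ∀ g : ℝ → ℝ, ContinuousOn g (Ici 0) → ∀ t₁ t₂ : ℝ, 0 ≤ t₁ → 0 ≤ t₂ →
      IntervalIntegrable (fun s => u s * g s) volume t₁ t₂ := by
    intro g hg t₁ t₂ h1 h2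
    have hsub : Set.uIcc t₁ t₂ ⊆ Ici 0 := fun x hx => le_trans (le_min h1 h2) hx.1
    have hsub' : Set.uIoc t₁ t₂ ⊆ Set.uIcc t₁ t₂ := Set.uIoc_subset_uIcc
    obtain ⟨z, hz, hzmax⟩ := isCompact_uIcc.exists_isMaxOn ⟨t₁, Set.left_mem_uIcc⟩
      ((hg.mono hsub).abs)
    apply intervalIntegrable_of_ae_bounded' (M := |g z|)
    · exact (humeas.aestronglyMeasurable.restrict).mul
        ((hg.mono (hsub'.trans hsub)).aestronglyMeasurable measurableSet_uIoc)
    · filter_upwards [ae_restrict_of_ae hu01, ae_restrict_mem measurableSet_uIoc] with s hs hmem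
      have h6 : |g s| ≤ |g z| := hzmax (hsub' hmem)
      have h7 : |u s| ≤ 1 := abs_le.2 ⟨by linarith [hs.1], hs.2⟩
      calc ‖u s * g s‖ = |u s| * |g s| := abs_mul _ _
        _ ≤ 1 * |g z| := mul_le_mul h7 h6 (abs_nonneg _) zero_le_one
        _ = |g z| := one_mul _
  have hGScont : ContinuousOn (fun s => β * S s * I s) (Ici 0) :=
    (continuousOn_const.mul hScont).mul hIcont
  have hiiSI : ∀ t₁ t₂ : ℝ, 0 ≤ t₁ → 0 ≤ t₂ →
      IntervalIntegrable (fun s => u s * β * S s * I s) volume t₁ t₂ := by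
    intro t₁ t₂ h1 h2
    have := hii (fun s => β * S s * I s) hGScont t₁ t₂ h1 h2
    convert this using 2 with s
    ring
  have hIγint : ∀ t₁ t₂ : ℝ, 0 ≤ t₁ → 0 ≤ t₂ →
      IntervalIntegrable (fun s => γ * I s) volume t₁ t₂ := by
    intro t₁ t₂ h1 h2
    apply ContinuousOn.intervalIntegrable
    exact continuousOn_const.mul (hIcont.mono (fun x hx => le_trans (le_min h1 h2) hx.1))
  -- positivity of S and I everywhere on [0, ∞)
  have hpos : ∀ t, 0 ≤ t → 0 < S t ∧ 0 < I t := by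
    intro b hb
    have hbne : (Icc (0:ℝ) b).Nonempty := ⟨0, le_refl 0, hb⟩
    have hIccIci : Icc (0:ℝ) b ⊆ Ici (0:ℝ) := Icc_subset_Ici_self
    obtain ⟨zS, hzS, hzSmax⟩ := isCompact_Icc.exists_isMaxOn hbne ((hScont.mono hIccIci).abs)
    obtain ⟨zI, hzI, hzImax⟩ := isCompact_Icc.exists_isMaxOn hbne ((hIcont.mono hIccIci).abs)
    constructor
    · refine persistence (f := S) (a := fun s => -(u s * β * I s)) (b := b)
        (M := β * |I zI|) (by positivity) (hScont.mono hIccIci) (hS0 ▸ hS₀) ?_ ?_ ?_ b ⟨hb, le_refl b⟩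
      · intro t₁ ht₁ t₂ ht₂
        have heqf : (fun s => -(u s * β * I s) * S s) = fun s => u s * (-(β * I s * S s)) := by
          funext s; ring
        rw [heqf]
        exact hii _ (((continuousOn_const.mul hIcont).mul hScont).neg) t₁ t₂ ht₁.1 ht₂.1
      · filter_upwards [hu01] with s hs hmem
        have h6 : |I s| ≤ |I zI| := hzImax hmem
        have h7 : |u s| ≤ 1 := abs_le.2 ⟨by linarith [hs.1], hs.2⟩
        calc |(-(u s * β * I s))| = |u s| * (β * |I s|) := by
              rw [abs_neg, abs_mul, abs_mul, abs_of_pos hβ]; ring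
          _ ≤ 1 * (β * |I zI|) := by
              apply mul_le_mul h7 _ (by positivity) zero_le_one
              exact mul_le_mul_of_nonneg_left h6 hβ.le
          _ = β * |I zI| := one_mul _
      · intro t ht
        rw [hS0, hSeq t ht.1]
        have : ∫ s in (0:ℝ)..t, (fun s => -(u s * β * I s) * S s) s
            = ∫ s in (0:ℝ)..t, -(u s * β * S s * I s) := by
          apply intervalIntegral.integral_congr
          intro s _; simp only; ring
        rw [this, intervalIntegral.integral_neg]
        ring
    · refine persistence (f := I) (a := fun s => u s * β * S s - γ) (b := b)
        (M := β * |S zS| + γ) (by positivity) (hIcont.mono hIccIci) (hI0 ▸ hI₀) ?_ ?_ ?_ b ⟨hb, le_refl b⟩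
      · intro t₁ ht₁ t₂ ht₂
        have heqf : (fun s => (u s * β * S s - γ) * I s)
            = fun s => u s * β * S s * I s - γ * I s := by
          funext s; ring
        rw [heqf]
        exact (hiiSI t₁ t₂ ht₁.1 ht₂.1).sub (hIγint t₁ t₂ ht₁.1 ht₂.1)
      · filter_upwards [hu01] with s hs hmem
        have h6 : |S s| ≤ |S zS| := hzSmax hmem
        have h7 : |u s| ≤ 1 := abs_le.2 ⟨by linarith [hs.1], hs.2⟩
        calc |u s * β * S s - γ| ≤ |u s * β * S s| + |γ| := abs_sub _ _
          _ = |u s| * (β * |S s|) + γ := by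
              rw [abs_mul, abs_mul, abs_of_pos hβ, abs_of_pos hγ]; ring
          _ ≤ 1 * (β * |S zS|) + γ := by
              have := mul_le_mul_of_nonneg_left h6 hβ.le
              have := mul_le_mul h7 this (by positivity) zero_le_one
              linarith
          _ = β * |S zS| + γ := by ring
      · intro t ht
        rw [hI0, hIeq t ht.1]
        congr 1
        apply intervalIntegral.integral_congr
        intro s _; simp only; ring
  -- two-point formula for S
  have hSsub : ∀ t₁ t₂ : ℝ, 0 ≤ t₁ → 0 ≤ t₂ →
      S t₂ - S t₁ = -∫ s in t₁..t₂, u s * β * S s * I s := by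
    intro t₁ t₂ h1 h2
    have h3 := intervalIntegral.integral_interval_sub_left (hiiSI 0 t₂ le_rfl h2) (hiiSI 0 t₁ le_rfl h1)
    rw [hSeq t₁ h1, hSeq t₂ h2]
    linarith
  have hIsub : ∀ t₁ t₂ : ℝ, 0 ≤ t₁ → 0 ≤ t₂ →
      I t₂ - I t₁ = ∫ s in t₁..t₂, (u s * β * S s * I s - γ * I s) := by
    intro t₁ t₂ h1 h2
    have hint : ∀ t : ℝ, 0 ≤ t → IntervalIntegrable
        (fun s => u s * β * S s * I s - γ * I s) volume 0 t :=
      fun t ht => (hiiSI 0 t le_rfl ht).sub (hIγint 0 t le_rfl ht)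
    have h3 := intervalIntegral.integral_interval_sub_left (hint t₂ h2) (hint t₁ h1)
    rw [hIeq t₁ h1, hIeq t₂ h2]
    linarith
  -- S is antitone on [0, ∞)
  have hSanti : ∀ t₁ ∈ Ici (0:ℝ), ∀ t₂ ∈ Ici (0:ℝ), t₁ ≤ t₂ → S t₂ ≤ S t₁ := by
    intro t₁ ht₁ t₂ ht₂ h12
    have h4 : 0 ≤ ∫ s in t₁..t₂, u s * β * S s * I s := by
      apply intervalIntegral.integral_nonneg_of_ae_restrict h12
      filter_upwards [ae_restrict_of_ae hu01, ae_restrict_mem measurableSet_Icc] with s hs hmem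
      have hs0 : (0:ℝ) ≤ s := le_trans ht₁ hmem.1
      obtain ⟨hSp, hIp⟩ := hpos s hs0
      have h8 : 0 ≤ β * S s * I s := by positivity
      have := mul_nonneg hs.1 h8
      simpa [mul_assoc] using this
    have := hSsub t₁ t₂ ht₁ ht₂
    linarith
  -- convergence of S
  obtain ⟨x₀, hx₀⟩ := tendsto_of_monotoneOn_bddAbove' (f := fun t => -(S t)) (c := 0)
    (fun a ha b hb hab => neg_le_neg (hSanti a ha b hb hab))
    ⟨0, by rintro _ ⟨t, ht, rfl⟩; simp [le_of_lt (hpos t ht).1]⟩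
  set x := -x₀ with hxdef
  have hTendS : Tendsto S atTop (nhds x) := by
    have := hx₀.neg
    simpa using this
  have hxleS : ∀ s, 0 ≤ s → x ≤ S s := by
    intro s hs
    apply le_of_tendsto hTendS
    filter_upwards [eventually_ge_atTop s] with t ht
    exact hSanti s hs t (le_trans hs ht) ht
  have hx0 : 0 ≤ x := by
    apply ge_of_tendsto hTendS
    filter_upwards [eventually_ge_atTop (0:ℝ)] with t ht
    exact (hpos t ht).1.le
  -- on [T', ∞), u = 1 a.e. : clean integral formulas
  have hSeq' : ∀ t, T' ≤ t → S t = S T' - ∫ s in T'..t, β * S s * I s := by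
    intro t ht
    have h5 : ∫ s in T'..t, u s * β * S s * I s = ∫ s in T'..t, β * S s * I s := by
      apply intervalIntegral.integral_congr_ae
      filter_upwards [huout] with s hs hmem
      rw [Set.uIoc_of_le ht] at hmem
      rw [hs (fun hc => absurd hc.2 (not_le.2 hmem.1)), one_mul]
    have := hSsub T' t hT'0.le (hT'0.le.trans ht)
    linarith [this, h5.symm ▸ this]
  have hIeq' : ∀ t, T' ≤ t → I t = I T' + ∫ s in T'..t, (β * S s * I s - γ * I s) := by
    intro t ht
    have h5 : ∫ s in T'..t, (u s * β * S s * I s - γ * I s)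
        = ∫ s in T'..t, (β * S s * I s - γ * I s) := by
      apply intervalIntegral.integral_congr_ae
      filter_upwards [huout] with s hs hmem
      rw [Set.uIoc_of_le ht] at hmem
      rw [hs (fun hc => absurd hc.2 (not_le.2 hmem.1)), one_mul]
    have := hIsub T' t hT'0.le (hT'0.le.trans ht)
    linarith [h5 ▸ this]
  -- FTC derivatives on [T', ∞)
  have hFTC : ∀ g : ℝ → ℝ, ContinuousOn g (Ici 0) → ∀ y, T' ≤ y →
      HasDerivWithinAt (fun t => ∫ s in T'..t, g s) (g y) (Ici y) y := by
    intro g hg y hy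
    have hy0 : (0:ℝ) < y := lt_of_lt_of_le hT'0 hy
    have hint : IntervalIntegrable g volume T' y :=
      (hg.mono (fun z hz => le_trans (le_min hT'0.le (hT'0.le.trans hy)) hz.1)).intervalIntegrable
    refine intervalIntegral.integral_hasDerivWithinAt_right hint
      ⟨Ioi 0, mem_nhdsWithin_of_mem_nhds (isOpen_Ioi.mem_nhds hy0),
        (hg.mono (fun z (hz : z ∈ Ioi 0) => le_of_lt hz)).aestronglyMeasurable measurableSet_Ioi⟩
      ((hg y hy0.le).mono (fun z (hz : z ∈ Ioi y) => (hy0.trans hz).le))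
  have hSderiv : ∀ y, T' ≤ y → HasDerivWithinAt S (-(β * S y * I y)) (Ici y) y := by
    intro y hy
    have hg : HasDerivWithinAt (fun t => S T' - ∫ s in T'..t, β * S s * I s)
        (0 - β * S y * I y) (Ici y) y :=
      (hasDerivWithinAt_const y (Ici y) (S T')).sub (hFTC _ hGScont y hy)
    rw [zero_sub] at hg
    exact hg.congr (fun z hz => hSeq' z (le_trans hy hz)) (hSeq' y hy)
  have hIderiv : ∀ y, T' ≤ y → HasDerivWithinAt I (β * S y * I y - γ * I y) (Ici y) y := by
    intro y hy
    have hHcont : ContinuousOn (fun s => β * S s * I s - γ * I s) (Ici 0) :=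
      hGScont.sub (continuousOn_const.mul hIcont)
    have hg : HasDerivWithinAt (fun t => I T' + ∫ s in T'..t, (β * S s * I s - γ * I s))
        (0 + (β * S y * I y - γ * I y)) (Ici y) y :=
      (hasDerivWithinAt_const y (Ici y) (I T')).add (hFTC _ hHcont y hy)
    rw [zero_add] at hg
    exact hg.congr (fun z hz => hIeq' z (le_trans hy hz)) (hIeq' y hy)
  -- conservation of Phi on [T', ∞)
  have hPhiConst : ∀ t, T' ≤ t →
      S t + I t - γ/β * Real.log (S t) = S T' + I T' - γ/β * Real.log (S T') := by
    intro b hb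
    have hsub2 : Icc T' b ⊆ Ici (0:ℝ) := fun z hz => hT'0.le.trans hz.1
    have hcont : ContinuousOn (fun t => S t + I t - γ/β * Real.log (S t)) (Icc T' b) := by
      apply ContinuousOn.sub ((hScont.mono hsub2).add (hIcont.mono hsub2))
      exact continuousOn_const.mul (ContinuousOn.log (hScont.mono hsub2)
        (fun z hz => ne_of_gt (hpos z (hsub2 hz)).1))
    have hderiv : ∀ y ∈ Ico T' b,
        HasDerivWithinAt (fun t => S t + I t - γ/β * Real.log (S t)) 0 (Ici y) y := by
      intro y hy
      have hy' : T' ≤ y := hy.1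
      have hy0 : (0:ℝ) ≤ y := hT'0.le.trans hy'
      have hSy := (hpos y hy0).1
      have hd1 := hSderiv y hy'
      have hd2 := hIderiv y hy'
      have hd3 : HasDerivWithinAt (fun t => Real.log (S t)) (-(β * S y * I y) / S y)
          (Ici y) y := hd1.log (ne_of_gt hSy)
      have hd4 := (hd1.add hd2).sub (hd3.const_mul (γ/β))
      have hval : -(β * S y * I y) + (β * S y * I y - γ * I y)
          - γ/β * (-(β * S y * I y) / S y) = 0 := by
        field_simp
        ring
      rw [hval] at hd4
      exact hd4
    exact constant_of_has_deriv_right_zero hcont hderiv b ⟨hb, le_refl b⟩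
  -- integral of I on [T', t] converges
  have hIint : ∀ a b : ℝ, 0 ≤ a → 0 ≤ b → IntervalIntegrable I volume a b :=
    fun a b ha hb => (hIcont.mono (fun z hz => le_trans (le_min ha hb) hz.1)).intervalIntegrable
  set F : ℝ → ℝ := fun t => ∫ s in T'..t, I s with hF
  have hFsub : ∀ t₁, T' ≤ t₁ → ∀ t₂, T' ≤ t₂ → F t₂ - F t₁ = ∫ s in t₁..t₂, I s :=
    fun t₁ h1 t₂ h2 => intervalIntegral.integral_interval_sub_left
      (hIint T' t₂ hT'0.le (hT'0.le.trans h2)) (hIint T' t₁ hT'0.le (hT'0.le.trans h1))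
  have hFmono : ∀ t₁ ∈ Ici T', ∀ t₂ ∈ Ici T', t₁ ≤ t₂ → F t₁ ≤ F t₂ := by
    intro t₁ h1 t₂ h2 h12
    have h4 : 0 ≤ ∫ s in t₁..t₂, I s := by
      apply intervalIntegral.integral_nonneg h12
      intro z hz
      exact (hpos z ((hT'0.le.trans h1).trans hz.1)).2.le
    have := hFsub t₁ h1 t₂ h2
    linarith
  have hGsplit : ∀ t, T' ≤ t →
      (∫ s in T'..t, (β * S s * I s - γ * I s)) = (S T' - S t) - γ * F t := by
    intro t ht
    have ht0 : (0:ℝ) ≤ t := hT'0.le.trans ht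
    have hGi : IntervalIntegrable (fun s => β * S s * I s) volume T' t :=
      (hGScont.mono (fun z hz => le_trans (le_min hT'0.le ht0) hz.1)).intervalIntegrable
    rw [intervalIntegral.integral_sub hGi (hIγint T' t hT'0.le ht0)]
    have h5 : ∫ s in T'..t, β * S s * I s = S T' - S t := by
      have := hSeq' t ht; linarith
    have h6 : ∫ s in T'..t, γ * I s = γ * F t := intervalIntegral.integral_const_mul γ I
    rw [h5, h6]
  have hIid : ∀ t, T' ≤ t → I t = I T' + (S T' - S t) - γ * F t := by
    intro t ht
    rw [hIeq' t ht, hGsplit t ht]; ring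
  have hFbdd : ∀ t, T' ≤ t → F t ≤ (I T' + S T') / γ := by
    intro t ht
    have ht0 : (0:ℝ) ≤ t := hT'0.le.trans ht
    have h7 := hIid t ht
    have h8 := (hpos t ht0).1.le
    have h9 := (hpos t ht0).2.le
    rw [le_div_iff₀ hγ]
    nlinarith
  obtain ⟨V, hV⟩ := tendsto_of_monotoneOn_bddAbove' (c := T') hFmono
    ⟨(I T' + S T') / γ, by rintro _ ⟨t, ht, rfl⟩; exact hFbdd t ht⟩
  have hFleV : ∀ t, T' ≤ t → F t ≤ V := by
    intro t ht
    apply ge_of_tendsto hV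
    filter_upwards [eventually_ge_atTop t] with t' ht'
    exact hFmono t ht t' (le_trans ht ht') ht'
  have hIlim : Tendsto I atTop (nhds (I T' + (S T' - x) - γ * V)) := by
    have h7 : Tendsto (fun t => I T' + (S T' - S t) - γ * F t) atTop
        (nhds (I T' + (S T' - x) - γ * V)) :=
      ((tendsto_const_nhds.sub hTendS).const_add (I T')).sub (hV.const_mul γ)
    apply h7.congr'
    filter_upwards [eventually_ge_atTop T'] with t ht
    exact (hIid t ht).symm
  set L := I T' + (S T' - x) - γ * V with hLdef
  have hL0 : 0 ≤ L := by
    apply ge_of_tendsto hIlim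
    filter_upwards [eventually_ge_atTop (0:ℝ)] with t ht
    exact (hpos t ht).2.le
  have hLz : L ≤ 0 := by
    by_contra hL
    push_neg at hL
    have h8 : ∀ᶠ t in atTop, L/2 < I t :=
      hIlim.eventually (eventually_gt_nhds (by linarith))
    obtain ⟨t₁, ht₁⟩ := eventually_atTop.1 (h8.and (eventually_ge_atTop T'))
    set t₂ := max t₁ T' with ht₂def
    have ht₂T' : T' ≤ t₂ := le_max_right _ _
    set t₃ := t₂ + (V - F t₂ + 1) / (L/2) with ht₃def
    have hVF : 0 ≤ V - F t₂ := by linarith [hFleV t₂ ht₂T']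
    have ht₃t₂ : t₂ ≤ t₃ := by
      rw [ht₃def]
      have : 0 ≤ (V - F t₂ + 1) / (L/2) := by positivity
      linarith
    have ht₃T' : T' ≤ t₃ := le_trans ht₂T' ht₃t₂
    have hlow : (t₃ - t₂) * (L/2) ≤ ∫ s in t₂..t₃, I s := by
      have h9 : (∫ s in t₂..t₃, (L/2)) ≤ ∫ s in t₂..t₃, I s := by
        apply intervalIntegral.integral_mono_on ht₃t₂ intervalIntegrable_const
          (hIint t₂ t₃ (hT'0.le.trans ht₂T') (hT'0.le.trans ht₃T'))
        intro z hz
        exact (ht₁ z (le_trans (le_max_left _ _) hz.1)).1.le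
      rw [intervalIntegral.integral_const, smul_eq_mul] at h9
      linarith
    have h10 := hFsub t₂ ht₂T' t₃ ht₃T'
    have h11 := hFleV t₃ ht₃T'
    have h12 : (t₃ - t₂) * (L/2) = V - F t₂ + 1 := by
      rw [ht₃def]
      field_simp
      ring
    linarith
  have hLeq : L = 0 := le_antisymm hLz hL0
  have hIlim0 : Tendsto I atTop (nhds 0) := hLeq ▸ hIlim
  -- x > 0
  set c' := S T' + I T' - γ/β * Real.log (S T') with hc'
  have hmS : ∀ t, T' ≤ t → Real.exp (-(β/γ) * c') ≤ S t := by
    intro t ht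
    have ht0 : (0:ℝ) ≤ t := hT'0.le.trans ht
    have h9 := hPhiConst t ht
    have hS9 := (hpos t ht0).1
    have hI9 := (hpos t ht0).2
    have hlog : Real.log (S t) = (β/γ) * (S t + I t - c') := by
      have h16 : γ/β * Real.log (S t) = S t + I t - c' := by
        rw [hc']; linarith [h9]
      have h17 : (β/γ) * (γ/β * Real.log (S t)) = (β/γ) * (S t + I t - c') := by rw [h16]
      rw [← h17]
      field_simp
    have hge : -(β/γ) * c' ≤ Real.log (S t) := by
      rw [hlog]
      have h13 : (0:ℝ) ≤ S t + I t := by linarith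
      have h14 : 0 < β/γ := by positivity
      nlinarith
    calc Real.exp (-(β/γ) * c') ≤ Real.exp (Real.log (S t)) := Real.exp_le_exp.2 hge
      _ = S t := Real.exp_log hS9
  have hxpos : 0 < x := by
    have : Real.exp (-(β/γ) * c') ≤ x := by
      apply ge_of_tendsto hTendS
      filter_upwards [eventually_ge_atTop T'] with t ht
      exact hmS t ht
    linarith [Real.exp_pos (-(β/γ) * c')]
  -- the final size equation
  have hlim2 : Tendsto (fun t => S t + I t - γ/β * Real.log (S t)) atTop
      (nhds (x + 0 - γ/β * Real.log x)) := by
    have hlog : Tendsto (fun t => Real.log (S t)) atTop (nhds (Real.log x)) :=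
      (Real.continuousAt_log (ne_of_gt hxpos)).tendsto.comp hTendS
    exact (hTendS.add hIlim0).sub (hlog.const_mul (γ/β))
  have hconst : Tendsto (fun t => S t + I t - γ/β * Real.log (S t)) atTop (nhds c') := by
    apply tendsto_const_nhds.congr'
    filter_upwards [eventually_ge_atTop T'] with t ht
    exact (hPhiConst t ht).symm
  have hfinal : x + 0 - γ/β * Real.log x = c' := tendsto_nhds_unique hlim2 hconst
  -- x ≤ γ/β
  have hxle : x ≤ γ/β := by
    by_contra hgt
    push_neg at hgt
    have hIT' := (hpos T' hT'0.le).2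
    have hmono : ∀ t, T' ≤ t → I T' ≤ I t := by
      intro t ht
      have h10 : 0 ≤ ∫ s in T'..t, (β * S s * I s - γ * I s) := by
        apply intervalIntegral.integral_nonneg ht
        intro z hz
        have hz0 : (0:ℝ) ≤ z := hT'0.le.trans hz.1
        have hSz := hxleS z hz0
        have hIz := (hpos z hz0).2
        have hgz : γ < β * S z := by
          have h15 : γ/β < S z := lt_of_lt_of_le hgt hSz
          calc γ = β * (γ/β) := by field_simp
            _ < β * S z := mul_lt_mul_of_pos_left h15 hβ
        nlinarith
      have := hIeq' t ht
      linarith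
    have h11 : ∀ᶠ t in atTop, I t < I T' := hIlim0.eventually (eventually_lt_nhds hIT')
    obtain ⟨t₂, ht₂a, ht₂b⟩ := (h11.and (eventually_ge_atTop T')).exists
    exact absurd (hmono t₂ ht₂b) (not_le.2 ht₂a)
  have hPhi0 : ∀ z : ℝ, Phi (β/γ) z 0 = z - γ/β * Real.log z := by
    intro z
    simp only [Phi, one_div_div]
    ring
  have hPhiT' : Phi (β/γ) (S T') (I T') = c' := by
    rw [hc']
    simp only [Phi, one_div_div]
  refine ⟨x, hTendS, ⟨hx0, hxle⟩, ?_, ?_⟩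
  · rw [hPhi0, hPhiT']; linarith [hfinal]
  · intro y hy hyeq
    rw [hPhi0, hPhiT'] at hyeq
    have hβγ1 : γ/β < 1 := (div_lt_one hβ).2 ((one_lt_div hγ).1 hR₀)
    have hx1 : x < 1 := lt_of_le_of_lt hxle hβγ1
    have hlogx : Real.log x < 0 := Real.log_neg hxpos hx1
    have h19 : 0 < γ/β := by positivity
    have hc'pos : 0 < c' := by
      have h21 : c' = x - γ/β * Real.log x := by linarith [hfinal]
      have h22 : γ/β * Real.log x < 0 := mul_neg_of_pos_of_neg h19 hlogx
      rw [h21]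
      linarith [h22, hxpos]
    have hy0 : 0 < y := by
      rcases eq_or_lt_of_le hy.1 with h | h
      · exfalso
        rw [← h] at hyeq
        simp [Real.log_zero] at hyeq
        linarith
      · exact h
    set f : ℝ → ℝ := fun z => z - γ/β * Real.log z with hfdef
    have hanti : StrictAntiOn f (Ioc 0 (γ/β)) := by
      apply strictAntiOn_of_deriv_neg (convex_Ioc 0 (γ/β))
      · apply ContinuousOn.sub continuousOn_id
        exact continuousOn_const.mul (ContinuousOn.log continuousOn_id
          (fun z hz => ne_of_gt hz.1))
      · intro z hz
        rw [interior_Ioc] at hz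
        have hzd : HasDerivAt f (1 - γ/β * z⁻¹) z :=
          (hasDerivAt_id z).sub ((Real.hasDerivAt_log (ne_of_gt hz.1)).const_mul (γ/β))
        rw [hzd.deriv]
        have h20 : 1 < γ/β * z⁻¹ := by
          rw [← div_eq_mul_inv]
          exact (one_lt_div hz.1).2 hz.2
        linarith
    have hxmem : x ∈ Ioc 0 (γ/β) := ⟨hxpos, hxle⟩
    have hymem : y ∈ Ioc 0 (γ/β) := ⟨hy0, hy.2⟩
    apply hanti.injOn hymem hxmem
    have hfx : f x = c' := by simp only [hfdef]; linarith [hfinal]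
    have hfy : f y = c' := by simp only [hfdef]; linarith [hyeq]
    rw [hfx, hfy]
end
end

section
/- Let α ∈ (0,1), D > 0 and T ≥ 0. Then the cost j(T) := Φ_{R₀}(S^T(T+D), I^T(T+D)) admits the closed-form expression j(T) = c₀ + (γ/β)·(1/α - 1)·ln(S^T(T+D)/S^T(T)), where c₀ := S₀ + I₀ - (γ/β)·ln S₀. -/
noncomputable section

open MeasureTheory Filter Set Real

/-- FTC derivative of a primitive of a function continuous on `[0,∞)`, at a positive point. -/
lemma hasDerivAt_primitive_pos {f : ℝ → ℝ} (hf : ContinuousOn f (Ici 0))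
    {a t₀ : ℝ} (ha : 0 ≤ a) (ht : 0 < t₀) :
    HasDerivAt (fun t => ∫ s in a..t, f s) (f t₀) t₀ := by
  have hca : ContinuousAt f t₀ :=
    hf.continuousAt (Filter.mem_of_superset (Ioi_mem_nhds ht) Ioi_subset_Ici_self)
  refine intervalIntegral.integral_hasDerivAt_right ?_ ?_ hca
  · exact (hf.mono (fun x hx => le_trans (le_min ha ht.le) hx.1)).intervalIntegrable
  · exact (ContinuousOn.stronglyMeasurableAtFilter isOpen_Ioi
      (hf.mono Ioi_subset_Ici_self) t₀ ht)

/-- A continuous function on `[a,b]` with zero derivative on `(a,b)` is constant. -/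
lemma const_of_deriv_zero {a b : ℝ} (hab : a ≤ b) {f : ℝ → ℝ}
    (hc : ContinuousOn f (Icc a b)) (hd : ∀ x ∈ Ioo a b, HasDerivAt f 0 x) :
    ∀ t ∈ Icc a b, f t = f a := by
  intro t ht
  have h := intervalIntegral.integral_eq_sub_of_hasDeriv_right_of_le ht.1
    (hc.mono (Icc_subset_Icc_right ht.2))
    (f' := fun _ => (0:ℝ))
    (fun x hx => (hd x ⟨hx.1, lt_of_lt_of_le hx.2 ht.2⟩).hasDerivWithinAt)
    intervalIntegrable_const
  simp at h
  linarith

/-- Main work-horse: on an interval where the control is constant `c`, positivity of `S, I`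
propagates, and the log/Φ identities hold. -/
lemma sir_piece (β γ c : ℝ) (hβ : 0 < β) {a b : ℝ}
    (ha : 0 ≤ a) (hab : a ≤ b) {S I : ℝ → ℝ}
    (hSc : ContinuousOn S (Ici 0)) (hIc : ContinuousOn I (Ici 0))
    (hS : ∀ t ∈ Icc a b, S t = S a - ∫ s in a..t, c * β * S s * I s)
    (hI : ∀ t ∈ Icc a b, I t = I a + ∫ s in a..t, (c * β * S s * I s - γ * I s))
    (hSa : 0 < S a) (hIa : 0 < I a) :
    (∀ t ∈ Icc a b, 0 < S t) ∧ (∀ t ∈ Icc a b, 0 < I t) ∧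
    Real.log (S b) - Real.log (S a) = -(c * β) * ∫ s in a..b, I s ∧
    (S b + I b - γ / β * Real.log (S b)) - (S a + I a - γ / β * Real.log (S a))
      = γ * (c - 1) * ∫ s in a..b, I s := by
  have hIcc0 : Icc a b ⊆ Ici 0 := fun x hx => le_trans ha hx.1
  have hScIcc : ContinuousOn S (Icc a b) := hSc.mono hIcc0
  have hIcIcc : ContinuousOn I (Icc a b) := hIc.mono hIcc0
  have hSIc : ContinuousOn (fun s => c * β * S s * I s) (Ici 0) :=
    (continuousOn_const.mul hSc).mul hIc
  -- derivatives on the open interval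
  have hSd : ∀ t₀ ∈ Ioo a b, HasDerivAt S (-(c * β * S t₀ * I t₀)) t₀ := by
    intro t₀ ht₀
    have hpos : (0:ℝ) < t₀ := lt_of_le_of_lt ha ht₀.1
    have h1 := hasDerivAt_primitive_pos hSIc ha hpos
    have h2 := h1.const_sub (S a)
    refine h2.congr_of_eventuallyEq ?_
    filter_upwards [isOpen_Ioo.mem_nhds ht₀] with t ht
    exact hS t (Ioo_subset_Icc_self ht)
  have hIintc : ContinuousOn (fun s => c * β * S s * I s - γ * I s) (Ici 0) :=
    hSIc.sub (continuousOn_const.mul hIc)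
  have hId : ∀ t₀ ∈ Ioo a b, HasDerivAt I (c * β * S t₀ * I t₀ - γ * I t₀) t₀ := by
    intro t₀ ht₀
    have hpos : (0:ℝ) < t₀ := lt_of_le_of_lt ha ht₀.1
    have h1 := hasDerivAt_primitive_pos hIintc ha hpos
    have h2 := h1.const_add (I a)
    refine h2.congr_of_eventuallyEq ?_
    filter_upwards [isOpen_Ioo.mem_nhds ht₀] with t ht
    exact hI t (Ioo_subset_Icc_self ht)
  -- primitive continuity helper
  have primCont : ∀ f : ℝ → ℝ, ContinuousOn f (Ici 0) →
      ContinuousOn (fun t => ∫ s in a..t, f s) (Icc a b) := by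
    intro f hf
    have hint : IntegrableOn f (uIcc a b) := by
      rw [uIcc_of_le hab]
      exact (hf.mono hIcc0).integrableOn_Icc
    have h := intervalIntegral.continuousOn_primitive_interval (μ := volume) hint
    rwa [uIcc_of_le hab] at h
  -- positivity of I
  have hIpos : ∀ t ∈ Icc a b, 0 < I t := by
    set A : ℝ → ℝ := fun t => ∫ s in a..t, (c * β * S s - γ) with hA
    have hwc : ContinuousOn (fun s => c * β * S s - γ) (Ici 0) :=
      (continuousOn_const.mul hSc).sub continuousOn_const
    have hAc : ContinuousOn A (Icc a b) := primCont _ hwc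
    have hkey := const_of_deriv_zero hab (f := fun t => I t * Real.exp (-A t))
      (hIcIcc.mul (Real.continuous_exp.comp_continuousOn hAc.neg)) ?_
    · intro t ht
      have h1 := hkey t ht
      have h2 : A a = 0 := intervalIntegral.integral_same
      simp only [h2, neg_zero, Real.exp_zero, mul_one] at h1
      nlinarith [Real.exp_pos (-A t), h1]
    · intro t₀ ht₀
      have hpos : (0:ℝ) < t₀ := lt_of_le_of_lt ha ht₀.1
      have hA' : HasDerivAt A (c * β * S t₀ - γ) t₀ := hasDerivAt_primitive_pos hwc ha hpos
      have h := (hId t₀ ht₀).mul (hA'.neg.exp)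
      refine h.congr_deriv ?_
      ring
  -- positivity of S
  have hSpos : ∀ t ∈ Icc a b, 0 < S t := by
    set B : ℝ → ℝ := fun t => ∫ s in a..t, (c * β * I s) with hB
    have hwc : ContinuousOn (fun s => c * β * I s) (Ici 0) := continuousOn_const.mul hIc
    have hBc : ContinuousOn B (Icc a b) := primCont _ hwc
    have hkey := const_of_deriv_zero hab (f := fun t => S t * Real.exp (B t))
      (hScIcc.mul (Real.continuous_exp.comp_continuousOn hBc)) ?_
    · intro t ht
      have h1 := hkey t ht
      have h2 : B a = 0 := intervalIntegral.integral_same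
      simp only [h2, Real.exp_zero, mul_one] at h1
      nlinarith [Real.exp_pos (B t), h1]
    · intro t₀ ht₀
      have hpos : (0:ℝ) < t₀ := lt_of_le_of_lt ha ht₀.1
      have hB' : HasDerivAt B (c * β * I t₀) t₀ := hasDerivAt_primitive_pos hwc ha hpos
      have h := (hSd t₀ ht₀).mul (hB'.exp)
      refine h.congr_deriv ?_
      ring
  have hSne : ∀ t ∈ Icc a b, S t ≠ 0 := fun t ht => (hSpos t ht).ne'
  -- the log identity
  have hlog : Real.log (S b) - Real.log (S a) = -(c * β) * ∫ s in a..b, I s := by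
    have hkey := const_of_deriv_zero hab
      (f := fun t => Real.log (S t) + c * β * ∫ s in a..t, I s)
      ((hScIcc.log hSne).add (continuousOn_const.mul (primCont _ hIc))) ?_
    · have h1 := hkey b (right_mem_Icc.mpr hab)
      have h2 : (∫ s in a..a, I s) = 0 := intervalIntegral.integral_same
      simp only [h2, mul_zero, add_zero] at h1
      linarith
    · intro t₀ ht₀
      have hpos : (0:ℝ) < t₀ := lt_of_le_of_lt ha ht₀.1
      have hne := hSne t₀ (Ioo_subset_Icc_self ht₀)
      have h1 := (hSd t₀ ht₀).log hne
      have h2 := (hasDerivAt_primitive_pos hIc ha hpos).const_mul (c * β)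
      have h := h1.add h2
      refine h.congr_deriv ?_
      field_simp
      ring
  -- the Φ identity
  have hPhi : (S b + I b - γ / β * Real.log (S b)) - (S a + I a - γ / β * Real.log (S a))
      = γ * (c - 1) * ∫ s in a..b, I s := by
    have hkey := const_of_deriv_zero hab
      (f := fun t => S t + I t - γ / β * Real.log (S t) - γ * (c - 1) * ∫ s in a..t, I s)
      (((hScIcc.add hIcIcc).sub (continuousOn_const.mul (hScIcc.log hSne))).sub
        (continuousOn_const.mul (primCont _ hIc))) ?_
    · have h1 := hkey b (right_mem_Icc.mpr hab)
      have h2 : (∫ s in a..a, I s) = 0 := intervalIntegral.integral_same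
      simp only [h2, mul_zero, sub_zero] at h1
      linarith
    · intro t₀ ht₀
      have hpos : (0:ℝ) < t₀ := lt_of_le_of_lt ha ht₀.1
      have hne := hSne t₀ (Ioo_subset_Icc_self ht₀)
      have h1 := (((hSd t₀ ht₀).add (hId t₀ ht₀)).sub
        (((hSd t₀ ht₀).log hne).const_mul (γ / β))).sub
        (((hasDerivAt_primitive_pos hIc ha hpos)).const_mul (γ * (c - 1)))
      refine h1.congr_deriv ?_
      field_simp
      ring
  exact ⟨hSpos, hIpos, hlog, hPhi⟩

theorem sir_cost_closed_form'
    (β γ S₀ I₀ α D T : ℝ) (ST IT : ℝ → ℝ)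
    (hβ : 0 < β) (hγ : 0 < γ)
    (hS₀ : 0 < S₀) (hI₀ : 0 < I₀)
    (hα : 0 < α) (hα1 : α < 1) (hD : 0 < D) (hT : 0 ≤ T)
    (hsol : (ST 0 = S₀ ∧ IT 0 = I₀ ∧
      ContinuousOn ST (Set.Ici 0) ∧ ContinuousOn IT (Set.Ici 0) ∧
      (∀ t, 0 ≤ t → ST t = S₀ - ∫ s in (0:ℝ)..t, (if s ∈ Set.Icc T (T+D) then α else 1) * β * ST s * IT s) ∧
      (∀ t, 0 ≤ t → IT t = I₀ + ∫ s in (0:ℝ)..t, ((if s ∈ Set.Icc T (T+D) then α else 1) * β * ST s * IT s - γ * IT s)))) :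
    0 < ST T ∧ 0 < ST (T + D) ∧
    ST (T + D) + IT (T + D) - γ / β * Real.log (ST (T + D)) =
      (S₀ + I₀ - γ / β * Real.log S₀) +
        γ / β * (1 / α - 1) * (Real.log (ST (T + D)) - Real.log (ST T)) := by
  obtain ⟨hS0, hI0, hSc, hIc, hSeq, hIeq⟩ := hsol
  set u : ℝ → ℝ := fun s => if s ∈ Set.Icc T (T+D) then α else 1 with hu
  set g : ℝ → ℝ := fun s => u s * β * ST s * IT s with hg
  have hTD : T ≤ T + D := by linarith
  have huabs : ∀ s, |u s| ≤ 1 := by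
    intro s
    simp only [hu]
    split_ifs
    · rw [abs_of_pos hα]; linarith
    · simp
  have hmu : Measurable u := Measurable.ite measurableSet_Icc measurable_const measurable_const
  -- interval integrability of g on [0, x]
  have hgInt : ∀ x, 0 ≤ x → IntervalIntegrable g volume 0 x := by
    intro x hx
    rw [intervalIntegrable_iff_integrableOn_Ioc_of_le hx]
    have hsub : Ioc (0:ℝ) x ⊆ Ici 0 := fun y hy => le_of_lt hy.1
    have hsub' : Icc (0:ℝ) x ⊆ Ici 0 := fun y hy => hy.1
    have haesm : AEStronglyMeasurable g (volume.restrict (Ioc 0 x)) :=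
      ((hmu.aestronglyMeasurable.mul aestronglyMeasurable_const).mul
        ((hSc.mono hsub).aestronglyMeasurable measurableSet_Ioc)).mul
        ((hIc.mono hsub).aestronglyMeasurable measurableSet_Ioc)
    obtain ⟨MS, hMS⟩ := (isCompact_Icc (a := (0:ℝ)) (b := x)).exists_bound_of_continuousOn
      (hSc.mono hsub')
    obtain ⟨MI, hMI⟩ := (isCompact_Icc (a := (0:ℝ)) (b := x)).exists_bound_of_continuousOn
      (hIc.mono hsub')
    refine Integrable.mono' (g := fun _ => 1 * |β| * (|MS| + 1) * (|MI| + 1))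
      (integrableOn_const measure_Ioc_lt_top.ne) haesm ?_
    rw [ae_restrict_iff' measurableSet_Ioc]
    filter_upwards with s hs
    have hsIcc : s ∈ Icc 0 x := Ioc_subset_Icc_self hs
    have h1' := hMS s hsIcc
    have h2' := hMI s hsIcc
    rw [Real.norm_eq_abs] at h1' h2'
    have h1 : |ST s| ≤ |MS| + 1 := by linarith [le_abs_self MS]
    have h2 : |IT s| ≤ |MI| + 1 := by linarith [le_abs_self MI]
    have h3 : |u s| ≤ 1 := huabs s
    have : ‖g s‖ = |u s| * |β| * |ST s| * |IT s| := by
      simp only [hg, Real.norm_eq_abs, abs_mul]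
    rw [this]
    gcongr <;> positivity
  have hIeq' : ∀ t, 0 ≤ t → IT t = I₀ + ∫ s in (0:ℝ)..t, (g s - γ * IT s) := by
    intro t ht
    rw [hIeq t ht]
  have hhInt : ∀ x, 0 ≤ x → IntervalIntegrable (fun s => g s - γ * IT s) volume 0 x := by
    intro x hx
    refine (hgInt x hx).sub ?_
    have : ContinuousOn (fun s => γ * IT s) (uIcc 0 x) := by
      rw [uIcc_of_le hx]
      exact continuousOn_const.mul (hIc.mono (fun y hy => hy.1))
    exact this.intervalIntegrable
  -- a.e. the control is 1 on [0, T]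
  have haeT : ∀ᵐ s : ℝ ∂volume, s ≠ T := by
    have h : (volume : Measure ℝ) {T} = 0 := Real.volume_singleton
    filter_upwards [compl_mem_ae_iff.mpr h] with s hs
    exact fun hh => hs (by simp [hh])
  -- piece equations on [0, T]
  have hS1 : ∀ t ∈ Icc (0:ℝ) T, ST t = ST 0 - ∫ s in (0:ℝ)..t, 1 * β * ST s * IT s := by
    intro t ht
    rw [hS0, hSeq t ht.1]
    congr 1
    apply intervalIntegral.integral_congr_ae
    filter_upwards [haeT] with s hs hmem
    rw [uIoc_of_le ht.1] at hmem
    simp only [hg, hu]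
    rw [if_neg (fun hmem2 => hs (le_antisymm (hmem.2.trans ht.2) hmem2.1))]
  have hI1 : ∀ t ∈ Icc (0:ℝ) T, IT t = IT 0 + ∫ s in (0:ℝ)..t, (1 * β * ST s * IT s - γ * IT s) := by
    intro t ht
    rw [hI0, hIeq' t ht.1]
    congr 1
    apply intervalIntegral.integral_congr_ae
    filter_upwards [haeT] with s hs hmem
    rw [uIoc_of_le ht.1] at hmem
    simp only [hg, hu]
    rw [if_neg (fun hmem2 => hs (le_antisymm (hmem.2.trans ht.2) hmem2.1))]
  have hS0pos : 0 < ST 0 := by rw [hS0]; exact hS₀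
  have hI0pos : 0 < IT 0 := by rw [hI0]; exact hI₀
  obtain ⟨hSpos1, hIpos1, _, hPhi1⟩ :=
    sir_piece β γ 1 hβ (le_refl (0:ℝ)) hT hSc hIc hS1 hI1 hS0pos hI0pos
  have hSTpos : 0 < ST T := hSpos1 T (right_mem_Icc.mpr hT)
  have hITpos : 0 < IT T := hIpos1 T (right_mem_Icc.mpr hT)
  -- piece equations on [T, T+D]
  have hS2 : ∀ t ∈ Icc T (T+D), ST t = ST T - ∫ s in T..t, α * β * ST s * IT s := by
    intro t ht
    have h0t : (0:ℝ) ≤ t := le_trans hT ht.1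
    have hsplit : (∫ s in (0:ℝ)..t, g s) - ∫ s in (0:ℝ)..T, g s = ∫ s in T..t, g s :=
      intervalIntegral.integral_interval_sub_left (hgInt t h0t) (hgInt T hT)
    have hcongr : (∫ s in T..t, g s) = ∫ s in T..t, α * β * ST s * IT s := by
      apply intervalIntegral.integral_congr
      intro s hs
      rw [uIcc_of_le ht.1] at hs
      have hmem : s ∈ Icc T (T+D) := ⟨hs.1, le_trans hs.2 ht.2⟩
      simp only [hg, hu]
      rw [if_pos hmem]
    rw [hSeq t h0t, hSeq T hT]
    rw [hcongr] at hsplit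
    linarith
  have hI2 : ∀ t ∈ Icc T (T+D), IT t = IT T + ∫ s in T..t, (α * β * ST s * IT s - γ * IT s) := by
    intro t ht
    have h0t : (0:ℝ) ≤ t := le_trans hT ht.1
    have hsplit : (∫ s in (0:ℝ)..t, (g s - γ * IT s)) - ∫ s in (0:ℝ)..T, (g s - γ * IT s)
        = ∫ s in T..t, (g s - γ * IT s) :=
      intervalIntegral.integral_interval_sub_left (hhInt t h0t) (hhInt T hT)
    have hcongr : (∫ s in T..t, (g s - γ * IT s)) = ∫ s in T..t, (α * β * ST s * IT s - γ * IT s) := by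
      apply intervalIntegral.integral_congr
      intro s hs
      rw [uIcc_of_le ht.1] at hs
      have hmem : s ∈ Icc T (T+D) := ⟨hs.1, le_trans hs.2 ht.2⟩
      simp only [hg, hu]
      rw [if_pos hmem]
    rw [hIeq' t h0t, hIeq' T hT]
    rw [hcongr] at hsplit
    linarith
  obtain ⟨hSpos2, hIpos2, hlog2, hPhi2⟩ :=
    sir_piece β γ α hβ hT hTD hSc hIc hS2 hI2 hSTpos hITpos
  -- assemble
  have hE1 : (ST T + IT T - γ / β * Real.log (ST T))
      - (S₀ + I₀ - γ / β * Real.log S₀) = 0 := by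
    rw [← hS0, ← hI0]
    rw [hPhi1]; ring
  have hα' : α ≠ 0 := hα.ne'
  have hβ' : β ≠ 0 := hβ.ne'
  have hk : γ / β * (1 / α - 1) * (Real.log (ST (T+D)) - Real.log (ST T))
      = γ * (α - 1) * ∫ s in T..(T+D), IT s := by
    rw [hlog2]
    field_simp
    ring
  refine ⟨hSTpos, hSpos2 (T + D) (right_mem_Icc.mpr hTD), ?_⟩
  linarith [hE1, hPhi2, hk]

/-- Let `α ∈ (0,1)`, `D > 0` and `T ≥ 0`. Then the cost
`j(T) := Φ_{R₀}(S^T(T+D), I^T(T+D))` admits the closed-form expression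
`j(T) = c₀ + (γ/β)·(1/α - 1)·ln(S^T(T+D)/S^T(T))`, where
`c₀ := S₀ + I₀ - (γ/β)·ln S₀`. -/
theorem sir_cost_closed_form
    (β γ S₀ I₀ α D T : ℝ) (ST IT : ℝ → ℝ)
    (hβ : 0 < β) (hγ : 0 < γ) (hR₀ : 1 < β / γ)
    (hS₀ : 0 < S₀) (hI₀ : 0 < I₀) (hSI : S₀ + I₀ ≤ 1)
    (hα : 0 < α) (hα1 : α < 1) (hD : 0 < D) (hT : 0 ≤ T)
    (hsol : IsSol β γ (ubb α T (T + D)) S₀ I₀ ST IT) :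
    Phi (β / γ) (ST (T + D)) (IT (T + D)) =
      (S₀ + I₀ - γ / β * Real.log S₀) +
        γ / β * (1 / α - 1) * Real.log (ST (T + D) / ST T) := by
  obtain ⟨hS0, hI0, hSc, hIc, hSeq, hIeq⟩ := hsol
  simp only [ubb] at hSeq hIeq
  obtain ⟨h1, h2, h3⟩ := sir_cost_closed_form' β γ S₀ I₀ α D T ST IT hβ hγ hS₀ hI₀ hα hα1 hD hT
    ⟨hS0, hI0, hSc, hIc, hSeq, hIeq⟩
  simp only [Phi]
  rw [one_div_div, Real.log_div h2.ne' h1.ne']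
  linarith [h3]
end
end

section
/- Let α ∈ (0,1) and D > 0. If T ≥ 0 is such that S^T(T) < S_herd, then ψ(T) > 0. -/
noncomputable section

open MeasureTheory Filter Set Real

section SirPsiHelpers
open intervalIntegral

lemma primitive_hasDerivAt {c : ℝ → ℝ} (hc : Continuous c) (a t : ℝ) :
    HasDerivAt (fun x => ∫ s in a..x, c s) (c t) t :=
  integral_hasDerivAt_right (hc.intervalIntegrable a t)
    (hc.stronglyMeasurable.stronglyMeasurableAtFilter) hc.continuousAt

lemma primitive_continuous {c : ℝ → ℝ} (hc : Continuous c) (a : ℝ) :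
    Continuous (fun x => ∫ s in a..x, c s) := by
  rw [continuous_iff_continuousAt]
  exact fun t => (primitive_hasDerivAt hc a t).continuousAt

/-- congruence off the right endpoint: integrability and integral values. -/
lemma aux_cong {g g' : ℝ → ℝ} {a b : ℝ} (hab : a ≤ b)
    (h : ∀ s ∈ Ioo a b, g s = g' s) (hg' : ContinuousOn g' (Icc a b)) :
    (∀ t ∈ Icc a b, IntervalIntegrable g volume a t)
      ∧ ∀ t ∈ Icc a b, (∫ s in a..t, g s) = ∫ s in a..t, g' s := by
  have ae_ne : ∀ᵐ s : ℝ ∂volume, s ≠ b := by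
    have hb : (volume : Measure ℝ) {b} = 0 := Real.volume_singleton
    filter_upwards [measure_eq_zero_iff_ae_notMem.mp hb] with s hs
    simpa using hs
  have key : ∀ t ∈ Icc a b, ∀ᵐ s : ℝ ∂volume, s ∈ Set.uIoc a t → g s = g' s := by
    intro t ht
    filter_upwards [ae_ne] with s hs hmem
    rw [uIoc_of_le ht.1] at hmem
    exact h s ⟨hmem.1, lt_of_le_of_ne (hmem.2.trans ht.2) hs⟩
  constructor
  · intro t ht
    have h1 : IntervalIntegrable g' volume a t := by
      apply ContinuousOn.intervalIntegrable
      rw [uIcc_of_le ht.1]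
      exact hg'.mono (Icc_subset_Icc le_rfl ht.2)
    rw [intervalIntegrable_iff] at h1 ⊢
    apply h1.congr
    filter_upwards [ae_restrict_mem measurableSet_uIoc, ae_restrict_of_ae (key t ht)]
      with s hs₁ hs₂
    exact (hs₂ hs₁).symm
  · intro t ht
    exact integral_congr_ae (key t ht)

/-- representation of solutions of linear ODEs in integral form. -/
lemma lin_rep {a b : ℝ} (hab : a ≤ b) {c f : ℝ → ℝ}
    (hc : ContinuousOn c (Icc a b)) (hf : ContinuousOn f (Icc a b))
    (heq : ∀ t ∈ Icc a b, f t = f a + ∫ s in a..t, c s * f s) :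
    ∀ t ∈ Icc a b, f t = f a * Real.exp (∫ s in a..t, c s) := by
  set c' : ℝ → ℝ := IccExtend hab ((Icc a b).restrict c) with hc'def
  set f' : ℝ → ℝ := IccExtend hab ((Icc a b).restrict f) with hf'def
  have hc'cont : Continuous c' := hc.restrict.Icc_extend'
  have hf'cont : Continuous f' := hf.restrict.Icc_extend'
  have hc'eq : ∀ t ∈ Icc a b, c' t = c t := fun t ht => IccExtend_of_mem hab _ ht
  have hf'eq : ∀ t ∈ Icc a b, f' t = f t := fun t ht => IccExtend_of_mem hab _ ht
  set P : ℝ → ℝ := fun t => ∫ s in a..t, c' s with hPdef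
  set F : ℝ → ℝ := fun t => f a + ∫ s in a..t, c' s * f' s with hFdef
  have hPint : ∀ t ∈ Icc a b, P t = ∫ s in a..t, c s := by
    intro t ht
    apply integral_congr
    intro s hs
    rw [uIcc_of_le ht.1] at hs
    exact hc'eq s ⟨hs.1, hs.2.trans ht.2⟩
  have hFeq : ∀ t ∈ Icc a b, F t = f t := by
    intro t ht
    have hI : (∫ s in a..t, c' s * f' s) = ∫ s in a..t, c s * f s := by
      apply integral_congr
      intro s hs
      rw [uIcc_of_le ht.1] at hs
      have hs' : s ∈ Icc a b := ⟨hs.1, hs.2.trans ht.2⟩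
      show c' s * f' s = c s * f s
      rw [hc'eq s hs', hf'eq s hs']
    rw [hFdef]
    simp only [hI]
    exact (heq t ht).symm
  have hPd : ∀ t, HasDerivAt P (c' t) t := primitive_hasDerivAt hc'cont a
  have hFd : ∀ t, HasDerivAt F (c' t * f' t) t := fun t =>
    (primitive_hasDerivAt (hc'cont.mul hf'cont) a t).const_add (f a)
  set g : ℝ → ℝ := fun t => F t * Real.exp (-P t) with hgdef
  have hgd : ∀ t, HasDerivAt g (c' t * f' t * Real.exp (-P t)
      + F t * (-(c' t) * Real.exp (-P t))) t := by
    intro t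
    have h1 : HasDerivAt (fun u => Real.exp (-P u)) (-(c' t) * Real.exp (-P t)) t := by
      have := ((hPd t).neg).exp
      simpa [mul_comm] using this
    exact (hFd t).mul h1
  have hg0 : ∀ x ∈ Ico a b, HasDerivWithinAt g 0 (Ici x) x := by
    intro x hx
    have hx' : x ∈ Icc a b := ⟨hx.1, hx.2.le⟩
    have hz : c' x * f' x * Real.exp (-P x) + F x * (-(c' x) * Real.exp (-P x)) = 0 := by
      rw [hf'eq x hx', hFeq x hx']; ring
    exact (hz ▸ hgd x).hasDerivWithinAt
  have hgcont : ContinuousOn g (Icc a b) := by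
    apply Continuous.continuousOn
    exact ((continuous_const.add (primitive_continuous (hc'cont.mul hf'cont) a)).mul
      (Real.continuous_exp.comp (primitive_continuous hc'cont a).neg))
  have hconst := constant_of_has_deriv_right_zero hgcont hg0
  intro t ht
  have h1 := hconst t ht
  have h2 : g a = f a := by
    simp [hgdef, hFdef, hPdef, integral_same]
  rw [h2] at h1
  have h3 : f t * Real.exp (-P t) = f a := by rw [← hFeq t ht]; exact h1
  rw [← hPint t ht]
  rw [Real.exp_neg] at h3
  field_simp at h3
  linarith [h3]

end SirPsiHelpers

open intervalIntegral in
/-- Let `α ∈ (0,1)` and `D > 0`. If `T ≥ 0` is such that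
`S^T(T) < S_herd`, then `ψ(T) > 0`. -/
theorem sir_psi_pos_below_herd
    (β γ S₀ I₀ α D T : ℝ) (ST IT : ℝ → ℝ → ℝ)
    (hβ : 0 < β) (hγ : 0 < γ) (hR₀ : 1 < β / γ)
    (hS₀ : 0 < S₀) (hI₀ : 0 < I₀) (hSI : S₀ + I₀ ≤ 1)
    (hα : 0 < α) (hα1 : α < 1) (hD : 0 < D)
    (hsol : ∀ T, 0 ≤ T → IsSol β γ (ubb α T (T + D)) S₀ I₀ (ST T) (IT T))
    (hT : 0 ≤ T) (hherd : ST T T < γ / β) :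
    0 < psi γ α D ST IT T := by
  obtain ⟨hS0, hI0, hScont, hIcont, hSeq, hIeq⟩ := hsol T hT
  set u : ℝ → ℝ := ubb α T (T + D) with hu
  set S : ℝ → ℝ := ST T with hS
  set I : ℝ → ℝ := IT T with hI
  set b : ℝ := T + D with hb
  have hTb : T ≤ b := by rw [hb]; linarith
  have hTb' : T < b := by rw [hb]; linarith
  -- control values
  have hu1 : ∀ s, s < T → u s = 1 := by
    intro s hs
    rw [hu, ubb, if_neg]
    rw [Set.mem_Icc]
    rintro ⟨h1, -⟩; linarith
  have huα : ∀ s ∈ Icc T b, u s = α := by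
    intro s hs
    rw [hu, ubb, if_pos]
    exact hs
  -- continuity on subintervals
  have hScont0 : ContinuousOn S (Icc 0 T) := hScont.mono Icc_subset_Ici_self
  have hIcont0 : ContinuousOn I (Icc 0 T) := hIcont.mono Icc_subset_Ici_self
  have hsubT : Icc T b ⊆ Ici 0 := fun x hx => le_trans hT hx.1
  have hScontT : ContinuousOn S (Icc T b) := hScont.mono hsubT
  have hIcontT : ContinuousOn I (Icc T b) := hIcont.mono hsubT
  -- I on [0, T]
  have hACI0 := aux_cong hT
    (g := fun s => u s * β * S s * I s - γ * I s)
    (g' := fun s => (β * S s - γ) * I s)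
    (fun s hs => by
      show u s * β * S s * I s - γ * I s = (β * S s - γ) * I s
      rw [hu1 s hs.2]; ring)
    (((continuousOn_const.mul hScont0).sub continuousOn_const).mul hIcont0)
  have hIrep0 : ∀ t ∈ Icc (0:ℝ) T,
      I t = I₀ * Real.exp (∫ s in (0:ℝ)..t, (β * S s - γ)) := by
    intro t ht
    have := lin_rep hT
      (c := fun s => β * S s - γ) (f := I)
      ((continuousOn_const.mul hScont0).sub continuousOn_const) hIcont0
      (fun t ht => by rw [hIeq t ht.1, hI0, hACI0.2 t ht]) t ht
    rwa [hI0] at this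
  have hIpos0 : ∀ t ∈ Icc (0:ℝ) T, 0 < I t := by
    intro t ht
    rw [hIrep0 t ht]
    exact mul_pos hI₀ (Real.exp_pos _)
  -- S on [0, T]
  have hACS0 := aux_cong hT
    (g := fun s => -(u s * β * S s * I s))
    (g' := fun s => (-(β * I s)) * S s)
    (fun s hs => by
      show -(u s * β * S s * I s) = (-(β * I s)) * S s
      rw [hu1 s hs.2]; ring)
    ((continuousOn_const.mul hIcont0).neg.mul hScont0)
  have hSheq0 : ∀ t ∈ Icc (0:ℝ) T,
      S t = S 0 + ∫ s in (0:ℝ)..t, (-(β * I s)) * S s := by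
    intro t ht
    rw [hSeq t ht.1, hS0, ← hACS0.2 t ht, intervalIntegral.integral_neg]
    ring
  have hSrep0 : ∀ t ∈ Icc (0:ℝ) T,
      S t = S₀ * Real.exp (∫ s in (0:ℝ)..t, -(β * I s)) := by
    intro t ht
    have := lin_rep hT
      (c := fun s => -(β * I s)) (f := S)
      (continuousOn_const.mul hIcont0).neg hScont0 hSheq0 t ht
    rwa [hS0] at this
  have hITpos : 0 < I T := hIpos0 T ⟨hT, le_rfl⟩
  have hSTpos : 0 < S T := by
    rw [hSrep0 T ⟨hT, le_rfl⟩]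
    exact mul_pos hS₀ (Real.exp_pos _)
  -- I on [T, b]
  have hACIT := aux_cong hTb
    (g := fun s => u s * β * S s * I s - γ * I s)
    (g' := fun s => (α * β * S s - γ) * I s)
    (fun s hs => by
      show u s * β * S s * I s - γ * I s = (α * β * S s - γ) * I s
      rw [huα s ⟨hs.1.le, hs.2.le⟩]; ring)
    (((continuousOn_const.mul hScontT).sub continuousOn_const).mul hIcontT)
  have hIheqT : ∀ t ∈ Icc T b,
      I t = I T + ∫ s in T..t, (α * β * S s - γ) * I s := by
    intro t ht
    have h0t : (0:ℝ) ≤ t := le_trans hT ht.1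
    have hadd := integral_add_adjacent_intervals
      (hACI0.1 T ⟨hT, le_rfl⟩) (hACIT.1 t ht)
    have e2 := hIeq T hT
    rw [hIeq t h0t, ← hadd, hACIT.2 t ht]
    linarith
  have hIrepT : ∀ t ∈ Icc T b,
      I t = I T * Real.exp (∫ s in T..t, (α * β * S s - γ)) :=
    lin_rep hTb
      ((continuousOn_const.mul hScontT).sub continuousOn_const) hIcontT hIheqT
  have hIposT : ∀ t ∈ Icc T b, 0 < I t := by
    intro t ht
    rw [hIrepT t ht]
    exact mul_pos hITpos (Real.exp_pos _)
  -- S on [T, b]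
  have hACST := aux_cong hTb
    (g := fun s => -(u s * β * S s * I s))
    (g' := fun s => (-(α * β * I s)) * S s)
    (fun s hs => by
      show -(u s * β * S s * I s) = (-(α * β * I s)) * S s
      rw [huα s ⟨hs.1.le, hs.2.le⟩]; ring)
    ((continuousOn_const.mul hIcontT).neg.mul hScontT)
  have hSheqT : ∀ t ∈ Icc T b,
      S t = S T + ∫ s in T..t, (-(α * β * I s)) * S s := by
    intro t ht
    have h0t : (0:ℝ) ≤ t := le_trans hT ht.1
    have hadd := integral_add_adjacent_intervals
      (hACS0.1 T ⟨hT, le_rfl⟩) (hACST.1 t ht)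
    have e2 := hSeq T hT
    have e2' : S T = S₀ + ∫ s in (0:ℝ)..T, -(u s * β * S s * I s) := by
      rw [intervalIntegral.integral_neg]; linarith
    rw [hSeq t h0t, ← hACST.2 t ht]
    rw [show (S₀ - ∫ s in (0:ℝ)..t, u s * β * S s * I s)
        = S₀ + ∫ s in (0:ℝ)..t, -(u s * β * S s * I s) by
      rw [intervalIntegral.integral_neg]; ring]
    rw [← hadd]
    linarith
  have hSrepT : ∀ t ∈ Icc T b,
      S t = S T * Real.exp (∫ s in T..t, -(α * β * I s)) :=
    lin_rep hTb (continuousOn_const.mul hIcontT).neg hScontT hSheqT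
  have hSle : ∀ t ∈ Icc T b, S t ≤ S T := by
    intro t ht
    rw [hSrepT t ht]
    have hint0 : 0 ≤ ∫ s in T..t, α * β * I s :=
      intervalIntegral.integral_nonneg ht.1
        (fun s hs => by
          have := hIposT s ⟨hs.1, hs.2.trans ht.2⟩
          positivity)
    have hint : (∫ s in T..t, -(α * β * I s)) ≤ 0 := by
      rw [intervalIntegral.integral_neg]; linarith
    nlinarith [Real.exp_le_one_iff.mpr hint, Real.exp_pos (∫ s in T..t, -(α * β * I s))]
  have hherd' : ∀ t ∈ Icc T b, β * S t < γ := by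
    intro t ht
    have h1 := hSle t ht
    have h2 : S T * β < γ := (lt_div_iff₀ hβ).mp hherd
    nlinarith
  have hcTcont : ContinuousOn (fun s => α * β * S s - γ) (Icc T b) :=
    (continuousOn_const.mul hScontT).sub continuousOn_const
  set c' : ℝ → ℝ := IccExtend hTb ((Icc T b).restrict (fun s => α * β * S s - γ))
    with hc'
  have hc'cont : Continuous c' := hcTcont.restrict.Icc_extend'
  have hc'eq : ∀ s ∈ Icc T b, c' s = α * β * S s - γ := fun s hs =>
    IccExtend_of_mem hTb _ hs
  set P : ℝ → ℝ := fun t => ∫ s in T..t, c' s with hP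
  have hPcont : Continuous P := primitive_continuous hc'cont T
  have hPint : ∀ t ∈ Icc T b, P t = ∫ s in T..t, (α * β * S s - γ) := by
    intro t ht
    apply integral_congr
    intro s hs
    rw [uIcc_of_le ht.1] at hs
    exact hc'eq s ⟨hs.1, hs.2.trans ht.2⟩
  set G : ℝ → ℝ := fun t => Real.exp (-P t) with hG
  have hGcont : Continuous G := Real.continuous_exp.comp hPcont.neg
  have hGpos : ∀ t, 0 < G t := fun t => Real.exp_pos _
  have hIrepT' : ∀ t ∈ Icc T b, I t = I T * Real.exp (P t) := by
    intro t ht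
    rw [hIrepT t ht, hPint t ht]
  have hFTC : ∀ x ∈ uIcc T b, HasDerivAt (fun t => -Real.exp (-P t)) (c' x * G x) x := by
    intro x _
    have h0 : HasDerivAt P (c' x) x := primitive_hasDerivAt hc'cont T x
    have h1 := (h0.neg).exp.neg
    have e : -(Real.exp (-P x) * -(c' x)) = c' x * G x := by
      show -(Real.exp (-P x) * -(c' x)) = c' x * Real.exp (-P x)
      ring
    exact e ▸ h1
  have hA : (∫ t in T..b, c' t * G t) = 1 - Real.exp (-P b) := by
    rw [integral_eq_sub_of_hasDerivAt hFTC ((hc'cont.mul hGcont).intervalIntegrable T b)]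
    have hPT : P T = 0 := by simp [hP]
    rw [hPT, neg_zero, Real.exp_zero]
    ring
  have hpos : 0 < ∫ t in T..b, (-(c' t) + (α - 1) * γ) * G t := by
    apply intervalIntegral_pos_of_pos_on
    · exact ((hc'cont.neg.add continuous_const).mul hGcont).intervalIntegrable T b
    · intro x hx
      have hx' : x ∈ Icc T b := ⟨hx.1.le, hx.2.le⟩
      have h1 : β * S x < γ := hherd' x hx'
      have h2 : 0 < α * (γ - β * S x) * G x :=
        mul_pos (mul_pos hα (by linarith)) (hGpos x)
      have e : (-(c' x) + (α - 1) * γ) * G x = α * (γ - β * S x) * G x := by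
        rw [hc'eq x hx']; ring
      rw [e]; exact h2
    · exact hTb'
  have hsplit : (∫ t in T..b, (-(c' t) + (α - 1) * γ) * G t)
      = -(∫ t in T..b, c' t * G t) + (α - 1) * γ * ∫ t in T..b, G t := by
    have e : (fun t => (-(c' t) + (α - 1) * γ) * G t)
        = fun t => -(c' t * G t) + (α - 1) * γ * G t := by funext t; ring
    rw [e, integral_add (f := fun t => -(c' t * G t)) (g := fun t => (α - 1) * γ * G t) (((hc'cont.mul hGcont).neg).intervalIntegrable T b)
      ((continuous_const.mul hGcont).intervalIntegrable T b),
      intervalIntegral.integral_neg, intervalIntegral.integral_const_mul]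
  have hIbrep : I b = I T * Real.exp (P b) := hIrepT' b ⟨hTb, le_rfl⟩
  have hITne : I T ≠ 0 := ne_of_gt hITpos
  have hdivT : I b / I T = Real.exp (P b) := by
    rw [hIbrep]; field_simp
  have hdiv : ∀ t ∈ Icc T b, I b / I t = Real.exp (P b) * G t := by
    intro t ht
    rw [hIbrep, hIrepT' t ht]
    show _ = Real.exp (P b) * Real.exp (-P t)
    rw [Real.exp_neg, mul_div_mul_left _ _ hITne, div_eq_mul_inv]
  have hintdiv : (∫ t in T..b, I b / I t) = Real.exp (P b) * ∫ t in T..b, G t := by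
    rw [show (∫ t in T..b, I b / I t) = ∫ t in T..b, Real.exp (P b) * G t from
      integral_congr (fun t ht => by
        rw [uIcc_of_le hTb] at ht; exact hdiv t ht),
      intervalIntegral.integral_const_mul]
  have hkey : 0 < -(1 - Real.exp (-P b)) + (α - 1) * γ * ∫ t in T..b, G t := by
    have h := hpos
    rw [hsplit, hA] at h
    exact h
  have hpsi : psi γ α D ST IT T
      = -Real.exp (P b) + (α - 1) * γ * (Real.exp (P b) * ∫ t in T..b, G t) + 1 := by
    unfold psi
    rw [← hb, ← hI, hdivT, hintdiv]
  rw [hpsi]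
  have hXY : Real.exp (P b) * Real.exp (-P b) = 1 := by rw [← Real.exp_add]; simp
  nlinarith [mul_pos (Real.exp_pos (P b)) hkey, hXY]
end
end

section
/- Let α = 0 and D > 0. Then for every T ≥ 0, the cost j(T) := Φ_{R₀}(S^T(T+D), I^T(T+D)) satisfies j(T) = (e^{-γD} - 1)·Ī(T) + c₀, where (S̄, Ī) is the uncontrolled solution (control 𝟏) with the same initial data and c₀ := S₀ + I₀ - (γ/β)·ln S₀; consequently j is minimized exactly at the time T* at which S̄(T*) = S_herd. -/
noncomputable section

open MeasureTheory Filter Set Real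

open Topology

namespace SIRaux


/-- FTC: right derivative of a primitive within `Ici x`. -/
lemma ftc_right {g : ℝ → ℝ} {a b x : ℝ} (hg : ContinuousOn g (Icc a b))
    (hx : x ∈ Ico a b) :
    HasDerivWithinAt (fun u => ∫ s in a..u, g s) (g x) (Ici x) x := by
  have hax : a ≤ x := hx.1
  have hxb : x < b := hx.2
  have hsub : Icc a x ⊆ Icc a b := Icc_subset_Icc le_rfl hxb.le
  have hint : IntervalIntegrable g volume a x := by
    have h : ContinuousOn g (uIcc a x) := by rw [uIcc_of_le hax]; exact hg.mono hsub
    exact h.intervalIntegrable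
  have hIoc : Ioc x b ∈ 𝓝[>] x := Ioc_mem_nhdsGT_of_mem ⟨le_rfl, hxb⟩
  have hmeas : StronglyMeasurableAtFilter g (𝓝[>] x) volume :=
    ⟨Ioc x b, hIoc, (hg.mono (Ioc_subset_Icc_self.trans (Icc_subset_Icc hax le_rfl))).aestronglyMeasurable measurableSet_Ioc⟩
  have hb : ContinuousWithinAt g (Ioi x) x := by
    have h0 : ContinuousWithinAt g (Icc a b) x := hg x ⟨hax, hxb.le⟩
    exact h0.mono_of_mem_nhdsWithin (mem_of_superset hIoc (Ioc_subset_Icc_self.trans (Icc_subset_Icc hax le_rfl) |>.trans (fun y hy => hy)))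
  exact intervalIntegral.integral_hasDerivWithinAt_right hint hmeas hb

/-- Right derivative of a function given by an integral equation on `Icc a b`. -/
lemma hasDeriv_right_of_eq_integral {F g : ℝ → ℝ} {c a b x : ℝ}
    (hg : ContinuousOn g (Icc a b)) (hx : x ∈ Ico a b)
    (hF : ∀ u ∈ Icc a b, F u = c + ∫ s in a..u, g s) :
    HasDerivWithinAt F (g x) (Ici x) x := by
  have h1 : HasDerivWithinAt (fun u => c + ∫ s in a..u, g s) (g x) (Ici x) x :=
    (ftc_right hg hx).const_add c
  have hmem : Icc a b ∈ 𝓝[Ici x] x := by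
    refine mem_nhdsWithin.2 ⟨Iio b, isOpen_Iio, hx.2, ?_⟩
    rintro y ⟨hy1, hy2⟩
    exact ⟨hx.1.trans hy2, le_of_lt hy1⟩
  refine h1.congr_of_eventuallyEq ?_ (hF x ⟨hx.1, hx.2.le⟩)
  filter_upwards [hmem] with u hu
  exact hF u hu


def vf (β γ : ℝ) (p : ℝ × ℝ) : ℝ × ℝ := (-(β * p.1 * p.2), β * p.1 * p.2 - γ * p.2)

lemma vf_lip {β γ M : ℝ} (hβ : 0 ≤ β) (hγ : 0 ≤ γ) :
    LipschitzOnWith (Real.toNNReal (2 * β * M + γ)) (vf β γ)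
      (Icc (-M) M ×ˢ Icc (-M) M) := by
  apply LipschitzOnWith.of_dist_le_mul
  rintro p ⟨hp1, hp2⟩ q ⟨hq1, hq2⟩
  have hM : 0 ≤ M := by
    rcases hp1 with ⟨h1, h2⟩; linarith
  have hp1' : |p.1| ≤ M := abs_le.2 ⟨hp1.1, hp1.2⟩
  have hp2' : |p.2| ≤ M := abs_le.2 ⟨hp2.1, hp2.2⟩
  have hq1' : |q.1| ≤ M := abs_le.2 ⟨hq1.1, hq1.2⟩
  have hq2' : |q.2| ≤ M := abs_le.2 ⟨hq2.1, hq2.2⟩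
  have hK : (Real.toNNReal (2 * β * M + γ) : ℝ) = 2 * β * M + γ :=
    Real.coe_toNNReal _ (by positivity)
  rw [Prod.dist_eq, Prod.dist_eq, hK]
  simp only [Real.dist_eq]
  set d1 := |p.1 - q.1| with hd1
  set d2 := |p.2 - q.2| with hd2
  have hd1n : 0 ≤ d1 := abs_nonneg _
  have hd2n : 0 ≤ d2 := abs_nonneg _
  have e1 : |p.1 * p.2 - q.1 * q.2| ≤ M * d2 + M * d1 := by
    have : p.1 * p.2 - q.1 * q.2 = p.1 * (p.2 - q.2) + (p.1 - q.1) * q.2 := by ring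
    rw [this]
    calc |p.1 * (p.2 - q.2) + (p.1 - q.1) * q.2|
        ≤ |p.1 * (p.2 - q.2)| + |(p.1 - q.1) * q.2| := abs_add_le _ _
      _ = |p.1| * d2 + d1 * |q.2| := by rw [abs_mul, abs_mul]
      _ ≤ M * d2 + M * d1 := by
          have := abs_nonneg (p.1 - q.1)
          nlinarith [abs_nonneg p.1, abs_nonneg q.2]
  have hle1 : d1 ≤ max d1 d2 := le_max_left _ _
  have hle2 : d2 ≤ max d1 d2 := le_max_right _ _
  apply max_le
  · have : -(β * p.1 * p.2) - -(β * q.1 * q.2) = -(β * (p.1 * p.2 - q.1 * q.2)) := by ring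
    rw [vf, vf]
    simp only
    rw [this, abs_neg, show β * (p.1 * p.2 - q.1 * q.2) = β * (p.1*p.2 - q.1*q.2) from rfl,
      abs_mul, abs_of_nonneg hβ]
    have hb1 : β * |p.1 * p.2 - q.1 * q.2| ≤ β * (M * d2 + M * d1) :=
      mul_le_mul_of_nonneg_left e1 hβ
    have hb2 : β * M * d1 ≤ β * M * max d1 d2 :=
      mul_le_mul_of_nonneg_left hle1 (by positivity)
    have hb3 : β * M * d2 ≤ β * M * max d1 d2 :=
      mul_le_mul_of_nonneg_left hle2 (by positivity)
    have hb4 : 0 ≤ γ * max d1 d2 := mul_nonneg hγ (le_trans hd1n hle1)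
    linarith
  · rw [vf, vf]
    simp only
    have h2 : β * p.1 * p.2 - γ * p.2 - (β * q.1 * q.2 - γ * q.2)
        = β * (p.1 * p.2 - q.1 * q.2) + (-(γ * (p.2 - q.2))) := by ring
    rw [h2]
    calc |β * (p.1 * p.2 - q.1 * q.2) + -(γ * (p.2 - q.2))|
        ≤ |β * (p.1 * p.2 - q.1 * q.2)| + |(-(γ * (p.2 - q.2)))| := abs_add_le _ _
      _ = β * |p.1 * p.2 - q.1 * q.2| + γ * d2 := by
          rw [abs_neg, abs_mul, abs_mul, abs_of_nonneg hβ, abs_of_nonneg hγ]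
      _ ≤ (2 * β * M + γ) * max d1 d2 := by
          have hb1 : β * |p.1 * p.2 - q.1 * q.2| ≤ β * (M * d2 + M * d1) :=
            mul_le_mul_of_nonneg_left e1 hβ
          have hb2 : β * M * d1 ≤ β * M * max d1 d2 :=
            mul_le_mul_of_nonneg_left hle1 (by positivity)
          have hb3 : β * M * d2 ≤ β * M * max d1 d2 :=
            mul_le_mul_of_nonneg_left hle2 (by positivity)
          have hb5 : γ * d2 ≤ γ * max d1 d2 := mul_le_mul_of_nonneg_left hle2 hγ
          linarith

/-- Uniqueness for the uncontrolled SIR integral equation on `Icc 0 b`. -/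
lemma sir_eqOn {β γ S0 I0 : ℝ} (hβ : 0 ≤ β) (hγ : 0 ≤ γ)
    {S1 I1 S2 I2 : ℝ → ℝ} {b : ℝ} (hb : 0 ≤ b)
    (hcS1 : ContinuousOn S1 (Icc 0 b)) (hcI1 : ContinuousOn I1 (Icc 0 b))
    (hcS2 : ContinuousOn S2 (Icc 0 b)) (hcI2 : ContinuousOn I2 (Icc 0 b))
    (hS1 : ∀ t ∈ Icc (0:ℝ) b, S1 t = S0 - ∫ s in (0:ℝ)..t, β * S1 s * I1 s)
    (hI1 : ∀ t ∈ Icc (0:ℝ) b, I1 t = I0 + ∫ s in (0:ℝ)..t, (β * S1 s * I1 s - γ * I1 s))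
    (hS2 : ∀ t ∈ Icc (0:ℝ) b, S2 t = S0 - ∫ s in (0:ℝ)..t, β * S2 s * I2 s)
    (hI2 : ∀ t ∈ Icc (0:ℝ) b, I2 t = I0 + ∫ s in (0:ℝ)..t, (β * S2 s * I2 s - γ * I2 s)) :
    ∀ t ∈ Icc (0:ℝ) b, S1 t = S2 t ∧ I1 t = I2 t := by
  obtain ⟨M1, hM1⟩ := (isCompact_Icc (a := (0:ℝ)) (b := b)).exists_bound_of_continuousOn hcS1
  obtain ⟨M2, hM2⟩ := (isCompact_Icc (a := (0:ℝ)) (b := b)).exists_bound_of_continuousOn hcI1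
  obtain ⟨M3, hM3⟩ := (isCompact_Icc (a := (0:ℝ)) (b := b)).exists_bound_of_continuousOn hcS2
  obtain ⟨M4, hM4⟩ := (isCompact_Icc (a := (0:ℝ)) (b := b)).exists_bound_of_continuousOn hcI2
  set M : ℝ := max (max M1 M2) (max M3 M4) with hM
  have mm1 : M1 ≤ M := (le_max_left M1 M2).trans (le_max_left _ _)
  have mm2 : M2 ≤ M := (le_max_right M1 M2).trans (le_max_left _ _)
  have mm3 : M3 ≤ M := (le_max_left M3 M4).trans (le_max_right _ _)
  have mm4 : M4 ≤ M := (le_max_right M3 M4).trans (le_max_right _ _)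
  have key : ∀ x C : ℝ, ‖x‖ ≤ C → C ≤ M → x ∈ Icc (-M) M := by
    intro x C h hCM
    rw [Real.norm_eq_abs] at h
    cases' abs_le.1 h with u v
    exact mem_Icc.2 ⟨by linarith, by linarith⟩
  have hM0 : 0 ≤ M := le_trans (norm_nonneg _) ((hM1 0 ⟨le_rfl, hb⟩).trans mm1)
  have hbox1 : ∀ t ∈ Icc (0:ℝ) b, (S1 t, I1 t) ∈ Icc (-M) M ×ˢ Icc (-M) M :=
    fun t ht => Set.mk_mem_prod (key _ _ (hM1 t ht) mm1) (key _ _ (hM2 t ht) mm2)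
  have hbox2 : ∀ t ∈ Icc (0:ℝ) b, (S2 t, I2 t) ∈ Icc (-M) M ×ˢ Icc (-M) M :=
    fun t ht => Set.mk_mem_prod (key _ _ (hM3 t ht) mm3) (key _ _ (hM4 t ht) mm4)
  -- derivatives
  have derS : ∀ (S I : ℝ → ℝ), ContinuousOn S (Icc 0 b) → ContinuousOn I (Icc 0 b) →
      (∀ t ∈ Icc (0:ℝ) b, S t = S0 - ∫ s in (0:ℝ)..t, β * S s * I s) →
      ∀ x ∈ Ico (0:ℝ) b, HasDerivWithinAt S (-(β * S x * I x)) (Ici x) x := by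
    intro S I hcS hcI hS x hx
    have hg : ContinuousOn (fun s => -(β * S s * I s)) (Icc 0 b) :=
      ((continuousOn_const.mul hcS).mul hcI).neg
    refine hasDeriv_right_of_eq_integral (c := S0) hg hx ?_
    intro u hu
    rw [hS u hu, intervalIntegral.integral_neg, sub_eq_add_neg]
  have derI : ∀ (S I : ℝ → ℝ), ContinuousOn S (Icc 0 b) → ContinuousOn I (Icc 0 b) →
      (∀ t ∈ Icc (0:ℝ) b, I t = I0 + ∫ s in (0:ℝ)..t, (β * S s * I s - γ * I s)) →
      ∀ x ∈ Ico (0:ℝ) b, HasDerivWithinAt I (β * S x * I x - γ * I x) (Ici x) x := by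
    intro S I hcS hcI hI x hx
    have hg : ContinuousOn (fun s => β * S s * I s - γ * I s) (Icc 0 b) :=
      ((continuousOn_const.mul hcS).mul hcI).sub (continuousOn_const.mul hcI)
    exact hasDeriv_right_of_eq_integral (c := I0) hg hx hI
  -- package
  set f : ℝ → ℝ × ℝ := fun t => (S1 t, I1 t) with hf
  set g : ℝ → ℝ × ℝ := fun t => (S2 t, I2 t) with hgdef
  have hf' : ∀ x ∈ Ico (0:ℝ) b, HasDerivWithinAt f (vf β γ (f x)) (Ici x) x :=
    fun x hx => ((derS S1 I1 hcS1 hcI1 hS1 x hx).prodMk (derI S1 I1 hcS1 hcI1 hI1 x hx))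
  have hg' : ∀ x ∈ Ico (0:ℝ) b, HasDerivWithinAt g (vf β γ (g x)) (Ici x) x :=
    fun x hx => ((derS S2 I2 hcS2 hcI2 hS2 x hx).prodMk (derI S2 I2 hcS2 hcI2 hI2 x hx))
  have h00 : f 0 = g 0 := by
    have e1 := hS1 0 ⟨le_rfl, hb⟩
    have e2 := hI1 0 ⟨le_rfl, hb⟩
    have e3 := hS2 0 ⟨le_rfl, hb⟩
    have e4 := hI2 0 ⟨le_rfl, hb⟩
    simp only [intervalIntegral.integral_same] at e1 e2 e3 e4
    simp only [hf, hgdef]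
    rw [e1, e2, e3, e4]
  have := ODE_solution_unique_of_mem_Icc_right
    (v := fun _ p => vf β γ p) (s := fun _ => Icc (-M) M ×ˢ Icc (-M) M)
    (K := Real.toNNReal (2 * β * M + γ))
    (fun _ _ => vf_lip hβ hγ)
    (hcS1.prodMk hcI1) hf' (fun t ht => hbox1 t (Ico_subset_Icc_self ht))
    (hcS2.prodMk hcI2) hg' (fun t ht => hbox2 t (Ico_subset_Icc_self ht))
    h00
  intro t ht
  have := this ht
  exact ⟨congrArg Prod.fst this, congrArg Prod.snd this⟩

/-- Facts about the uncontrolled solution. -/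
structure Bar (β γ S0 I0 : ℝ) (S I : ℝ → ℝ) : Prop where
  contS : ContinuousOn S (Ici 0)
  contI : ContinuousOn I (Ici 0)
  eqS : ∀ t, 0 ≤ t → S t = S0 - ∫ s in (0:ℝ)..t, β * S s * I s
  eqI : ∀ t, 0 ≤ t → I t = I0 + ∫ s in (0:ℝ)..t, (β * S s * I s - γ * I s)

namespace Bar

variable {β γ S0 I0 : ℝ} {S I : ℝ → ℝ} (hB : Bar β γ S0 I0 S I)
include hB

lemma S_zero : S 0 = S0 := by
  have := hB.eqS 0 le_rfl; simpa using this

lemma I_zero : I 0 = I0 := by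
  have := hB.eqI 0 le_rfl; simpa using this

lemma contSI {b : ℝ} : ContinuousOn (fun s => β * S s * I s) (Icc 0 b) :=
  ((continuousOn_const.mul (hB.contS.mono Icc_subset_Ici_self)).mul
    (hB.contI.mono Icc_subset_Ici_self))

lemma derS_within {b x : ℝ} (hx : x ∈ Ico (0:ℝ) b) :
    HasDerivWithinAt S (-(β * S x * I x)) (Ici x) x := by
  refine hasDeriv_right_of_eq_integral (c := S0) hB.contSI.neg hx ?_
  intro u hu
  rw [hB.eqS u hu.1]; simp only [Pi.neg_apply]; rw [intervalIntegral.integral_neg, sub_eq_add_neg]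

lemma derI_within {b x : ℝ} (hx : x ∈ Ico (0:ℝ) b) :
    HasDerivWithinAt I (β * S x * I x - γ * I x) (Ici x) x := by
  refine hasDeriv_right_of_eq_integral (c := I0)
    (hB.contSI.sub (continuousOn_const.mul (hB.contI.mono Icc_subset_Ici_self))) hx ?_
  intro u hu
  exact hB.eqI u hu.1

/-- positivity of `S`. -/
lemma S_pos (hS0 : 0 < S0) : ∀ t, 0 ≤ t → 0 < S t := by
  intro b hb
  -- work on `Icc 0 b`
  have hIb : ContinuousOn I (Icc 0 b) := hB.contI.mono Icc_subset_Ici_self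
  set A : ℝ → ℝ := fun u => ∫ s in (0:ℝ)..u, I s with hA
  have hAc : ContinuousOn A (Icc 0 b) := by
    have : IntegrableOn I (uIcc 0 b) volume := by
      rw [uIcc_of_le hb]; exact hIb.integrableOn_Icc
    have := intervalIntegral.continuousOn_primitive_interval this
    rwa [uIcc_of_le hb] at this
  set E : ℝ → ℝ := fun u => S u * Real.exp (β * A u) with hE
  have hEc : ContinuousOn E (Icc 0 b) :=
    (hB.contS.mono Icc_subset_Ici_self).mul
      (Real.continuous_exp.comp_continuousOn (continuousOn_const.mul hAc))
  have hE' : ∀ x ∈ Ico (0:ℝ) b, HasDerivWithinAt E 0 (Ici x) x := by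
    intro x hx
    have hA' : HasDerivWithinAt A (I x) (Ici x) x := ftc_right hIb hx
    have hexp : HasDerivWithinAt (fun u => Real.exp (β * A u)) (Real.exp (β * A x) * (β * I x)) (Ici x) x :=
      (hA'.const_mul β).exp
    have := (hB.derS_within hx).mul hexp
    refine this.congr_deriv ?_
    ring
  have hcon := constant_of_has_deriv_right_zero hEc hE'
  have hEb := hcon b ⟨hb, le_rfl⟩
  have hE0 : E 0 = S0 := by
    simp only [hE, hA]
    simp [hB.S_zero]
  rw [hE0] at hEb
  simp only [hE] at hEb
  have hexppos : 0 < Real.exp (β * A b) := Real.exp_pos _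
  have hpos : 0 < S b * Real.exp (β * A b) := by rw [hEb]; exact hS0
  rcases mul_pos_iff.1 hpos with ⟨h1, _⟩ | ⟨_, h2⟩
  · exact h1
  · linarith

/-- positivity of `I`. -/
lemma I_pos (hI0 : 0 < I0) : ∀ t, 0 ≤ t → 0 < I t := by
  intro b hb
  have hSb : ContinuousOn (fun s => β * S s - γ) (Icc 0 b) :=
    (continuousOn_const.mul (hB.contS.mono Icc_subset_Ici_self)).sub continuousOn_const
  set A : ℝ → ℝ := fun u => ∫ s in (0:ℝ)..u, (β * S s - γ) with hA
  have hAc : ContinuousOn A (Icc 0 b) := by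
    have : IntegrableOn (fun s => β * S s - γ) (uIcc 0 b) volume := by
      rw [uIcc_of_le hb]; exact hSb.integrableOn_Icc
    have := intervalIntegral.continuousOn_primitive_interval this
    rwa [uIcc_of_le hb] at this
  set G : ℝ → ℝ := fun u => I u * Real.exp (-A u) with hG
  have hGc : ContinuousOn G (Icc 0 b) :=
    (hB.contI.mono Icc_subset_Ici_self).mul
      (Real.continuous_exp.comp_continuousOn hAc.neg)
  have hG' : ∀ x ∈ Ico (0:ℝ) b, HasDerivWithinAt G 0 (Ici x) x := by
    intro x hx
    have hA' : HasDerivWithinAt A (β * S x - γ) (Ici x) x := ftc_right hSb hx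
    have hexp : HasDerivWithinAt (fun u => Real.exp (-A u)) (Real.exp (-A x) * (-(β * S x - γ))) (Ici x) x :=
      hA'.neg.exp
    have := (hB.derI_within hx).mul hexp
    refine this.congr_deriv ?_
    ring
  have hcon := constant_of_has_deriv_right_zero hGc hG'
  have hGb := hcon b ⟨hb, le_rfl⟩
  have hG0 : G 0 = I0 := by simp [hG, hA, hB.I_zero]
  rw [hG0] at hGb
  simp only [hG] at hGb
  have hexppos : 0 < Real.exp (-A b) := Real.exp_pos _
  have hpos : 0 < I b * Real.exp (-A b) := by rw [hGb]; exact hI0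
  rcases mul_pos_iff.1 hpos with ⟨h1, _⟩ | ⟨_, h2⟩
  · exact h1
  · linarith

/-- full derivative at interior points. -/
lemma derS_at {x : ℝ} (hx : 0 < x) : HasDerivAt S (-(β * S x * I x)) x := by
  have hIci : Ici (0:ℝ) ∈ 𝓝 x := Ici_mem_nhds hx
  have hg : ContinuousOn (fun s => β * S s * I s) (Ici 0) :=
    (continuousOn_const.mul hB.contS).mul hB.contI
  have hint : IntervalIntegrable (fun s => β * S s * I s) volume 0 x := by
    have : ContinuousOn (fun s => β * S s * I s) (uIcc 0 x) := by
      rw [uIcc_of_le hx.le]; exact hg.mono Icc_subset_Ici_self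
    exact this.intervalIntegrable
  have hmeas : StronglyMeasurableAtFilter (fun s => β * S s * I s) (𝓝 x) volume :=
    ⟨Ici 0, hIci, hg.aestronglyMeasurable measurableSet_Ici⟩
  have hca : ContinuousAt (fun s => β * S s * I s) x := hg.continuousAt hIci
  have h1 : HasDerivAt (fun u => S0 - ∫ s in (0:ℝ)..u, β * S s * I s)
      (-(β * S x * I x)) x :=
    (intervalIntegral.integral_hasDerivAt_right hint hmeas hca).const_sub S0
  refine h1.congr_of_eventuallyEq ?_
  filter_upwards [hIci] with u hu
  exact hB.eqS u hu

lemma derI_at {x : ℝ} (hx : 0 < x) : HasDerivAt I (β * S x * I x - γ * I x) x := by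
  have hIci : Ici (0:ℝ) ∈ 𝓝 x := Ici_mem_nhds hx
  have hg : ContinuousOn (fun s => β * S s * I s - γ * I s) (Ici 0) :=
    ((continuousOn_const.mul hB.contS).mul hB.contI).sub (continuousOn_const.mul hB.contI)
  have hint : IntervalIntegrable (fun s => β * S s * I s - γ * I s) volume 0 x := by
    have : ContinuousOn (fun s => β * S s * I s - γ * I s) (uIcc 0 x) := by
      rw [uIcc_of_le hx.le]; exact hg.mono Icc_subset_Ici_self
    exact this.intervalIntegrable
  have hmeas : StronglyMeasurableAtFilter (fun s => β * S s * I s - γ * I s) (𝓝 x) volume :=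
    ⟨Ici 0, hIci, hg.aestronglyMeasurable measurableSet_Ici⟩
  have hca : ContinuousAt (fun s => β * S s * I s - γ * I s) x := hg.continuousAt hIci
  have h1 : HasDerivAt (fun u => I0 + ∫ s in (0:ℝ)..u, (β * S s * I s - γ * I s))
      (β * S x * I x - γ * I x) x :=
    (intervalIntegral.integral_hasDerivAt_right hint hmeas hca).const_add I0
  refine h1.congr_of_eventuallyEq ?_
  filter_upwards [hIci] with u hu
  exact hB.eqI u hu

/-- `S` is strictly decreasing. -/
lemma S_strictAnti (hβ : 0 < β) (hS0 : 0 < S0) (hI0 : 0 < I0) :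
    StrictAntiOn S (Ici 0) := by
  apply strictAntiOn_of_deriv_neg (convex_Ici 0) hB.contS
  intro x hx
  rw [interior_Ici] at hx
  rw [(hB.derS_at hx).deriv]
  have h1 := hB.S_pos hS0 x hx.le
  have h2 := hB.I_pos hI0 x hx.le
  nlinarith [mul_pos (mul_pos hβ h1) h2]

/-- Conservation of `Φ`. -/
lemma phi_const (hβ : 0 < β) (hS0 : 0 < S0) (hI0 : 0 < I0) :
    ∀ t, 0 ≤ t → S t + I t - γ / β * Real.log (S t) = S0 + I0 - γ / β * Real.log S0 := by
  intro b hb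
  set H : ℝ → ℝ := fun u => S u + I u - γ / β * Real.log (S u) with hH
  have hne : ∀ u ∈ Icc (0:ℝ) b, S u ≠ 0 := fun u hu => (hB.S_pos hS0 u hu.1).ne'
  have hHc : ContinuousOn H (Icc 0 b) := by
    refine ((hB.contS.mono Icc_subset_Ici_self).add (hB.contI.mono Icc_subset_Ici_self)).sub
      (continuousOn_const.mul ((hB.contS.mono Icc_subset_Ici_self).log hne))
  have hH' : ∀ x ∈ Ico (0:ℝ) b, HasDerivWithinAt H 0 (Ici x) x := by
    intro x hx
    have hxpos := hB.S_pos hS0 x hx.1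
    have hlog : HasDerivWithinAt (fun u => Real.log (S u))
        ((S x)⁻¹ * -(β * S x * I x)) (Ici x) x :=
      (Real.hasDerivAt_log hxpos.ne').comp_hasDerivWithinAt x (hB.derS_within hx)
    have := ((hB.derS_within hx).add (hB.derI_within hx)).sub (hlog.const_mul (γ / β))
    refine this.congr_deriv ?_
    field_simp
    ring
  have hcon := constant_of_has_deriv_right_zero hHc hH'
  have := hcon b ⟨hb, le_rfl⟩
  simpa [hH, hB.S_zero, hB.I_zero] using this

lemma I_deriv (hβ : 0 < β) {x : ℝ} (hx : 0 < x) :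
    deriv I x = (β * S x - γ) * I x := by
  rw [(hB.derI_at hx).deriv]; ring

lemma I_mono (hβ : 0 < β) (hS0 : 0 < S0) (hI0 : 0 < I0) {T : ℝ} (hT : 0 ≤ T)
    (hST : γ / β ≤ S T) : MonotoneOn I (Icc 0 T) := by
  apply monotoneOn_of_deriv_nonneg (convex_Icc 0 T) (hB.contI.mono Icc_subset_Ici_self)
  · intro x hx
    rw [interior_Icc] at hx
    exact ((hB.derI_at hx.1).differentiableAt).differentiableWithinAt
  · intro x hx
    rw [interior_Icc] at hx
    rw [hB.I_deriv hβ hx.1]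
    have hSx : S T < S x := hB.S_strictAnti hβ hS0 hI0 hx.1.le hT hx.2
    have hIx : 0 < I x := hB.I_pos hI0 x hx.1.le
    have hkey : γ < S x * β := (div_lt_iff₀ hβ).1 (lt_of_le_of_lt hST hSx)
    have : 0 < (β * S x - γ) * I x := mul_pos (by nlinarith) hIx
    linarith
  
lemma I_anti (hβ : 0 < β) (hS0 : 0 < S0) (hI0 : 0 < I0) {T : ℝ} (hT : 0 ≤ T)
    (hST : S T ≤ γ / β) : AntitoneOn I (Ici T) := by
  apply antitoneOn_of_deriv_nonpos (convex_Ici T)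
    (hB.contI.mono (Ici_subset_Ici.2 hT))
  · intro x hx
    rw [interior_Ici] at hx
    exact ((hB.derI_at (lt_of_le_of_lt hT hx)).differentiableAt).differentiableWithinAt
  · intro x hx
    rw [interior_Ici] at hx
    have hx0 : 0 < x := lt_of_le_of_lt hT hx
    rw [hB.I_deriv hβ hx0]
    have hSx : S x < S T := hB.S_strictAnti hβ hS0 hI0 hT hx0.le hx
    have hIx : 0 < I x := hB.I_pos hI0 x hx0.le
    have hkey : S x * β < γ := (lt_div_iff₀ hβ).1 (lt_of_lt_of_le hSx hST)
    have : (β * S x - γ) * I x < 0 := mul_neg_of_neg_of_pos (by nlinarith) hIx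
    linarith

lemma I_lt_of_lt_Tstar (hβ : 0 < β) (hS0 : 0 < S0) (hI0 : 0 < I0) {T Ts : ℝ}
    (hT : 0 ≤ T) (hTTs : T < Ts) (hTs : S Ts = γ / β) : I T < I Ts := by
  have h : StrictMonoOn I (Icc T Ts) := by
    apply strictMonoOn_of_deriv_pos (convex_Icc T Ts)
      (hB.contI.mono ((Icc_subset_Ici_self).trans (Ici_subset_Ici.2 hT)))
    intro x hx
    rw [interior_Icc] at hx
    have hx0 : 0 < x := lt_of_le_of_lt hT hx.1
    rw [hB.I_deriv hβ hx0]
    have hSx : S Ts < S x := hB.S_strictAnti hβ hS0 hI0 hx0.le (hT.trans hTTs.le) hx.2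
    rw [hTs] at hSx
    have hIx : 0 < I x := hB.I_pos hI0 x hx0.le
    have hkey : γ < S x * β := (div_lt_iff₀ hβ).1 hSx
    exact mul_pos (by nlinarith) hIx
  exact h ⟨le_rfl, hTTs.le⟩ ⟨hTTs.le, le_rfl⟩ hTTs

lemma I_lt_of_Tstar_lt (hβ : 0 < β) (hS0 : 0 < S0) (hI0 : 0 < I0) {T Ts : ℝ}
    (hTs0 : 0 ≤ Ts) (hTTs : Ts < T) (hTs : S Ts = γ / β) : I T < I Ts := by
  have h : StrictAntiOn I (Icc Ts T) := by
    apply strictAntiOn_of_deriv_neg (convex_Icc Ts T)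
      (hB.contI.mono ((Icc_subset_Ici_self).trans (Ici_subset_Ici.2 hTs0)))
    intro x hx
    rw [interior_Icc] at hx
    have hx0 : 0 < x := lt_of_le_of_lt hTs0 hx.1
    rw [hB.I_deriv hβ hx0]
    have hSx : S x < S Ts := hB.S_strictAnti hβ hS0 hI0 hTs0 hx0.le hx.1
    rw [hTs] at hSx
    have hIx : 0 < I x := hB.I_pos hI0 x hx0.le
    have hkey : S x * β < γ := (lt_div_iff₀ hβ).1 hSx
    exact mul_neg_of_neg_of_pos (by nlinarith) hIx
  exact h ⟨le_rfl, hTTs.le⟩ ⟨hTTs.le, le_rfl⟩ hTTs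

lemma exists_Tstar (hβ : 0 < β) (hγ : 0 < γ) (hS0 : 0 < S0) (hI0 : 0 < I0)
    (hherd : γ / β < S0) : ∃ Ts, 0 ≤ Ts ∧ S Ts = γ / β := by
  have hlt : ∃ t, 0 ≤ t ∧ S t < γ / β := by
    by_contra hc
    push_neg at hc
    have hmono : MonotoneOn I (Ici 0) := by
      apply monotoneOn_of_deriv_nonneg (convex_Ici 0) hB.contI
      · intro x hx
        rw [interior_Ici] at hx
        exact ((hB.derI_at hx).differentiableAt).differentiableWithinAt
      · intro x hx
        rw [interior_Ici] at hx
        rw [hB.I_deriv hβ hx]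
        have hSx : γ / β ≤ S x := hc x hx.le
        have hIx : 0 < I x := hB.I_pos hI0 x hx.le
        have hkey : γ ≤ S x * β := (div_le_iff₀ hβ).1 hSx
        have : 0 ≤ (β * S x - γ) * I x := mul_nonneg (by nlinarith) hIx.le
        linarith
    have hIlow : ∀ s, 0 ≤ s → I0 ≤ I s := by
      intro s hs
      have := hmono (self_mem_Ici) (mem_Ici.2 hs) hs
      rwa [hB.I_zero] at this
    set t : ℝ := (S0 - γ / β) / (γ * I0) + 1 with htdef
    have hS0ge : γ / β ≤ S0 := by
      have := hc 0 le_rfl; rwa [hB.S_zero] at this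
    have ht0 : 0 ≤ t := by
      have h1 : (0:ℝ) ≤ (S0 - γ / β) / (γ * I0) :=
        div_nonneg (by linarith) (by positivity)
      rw [htdef]; linarith
    have hintle : ∫ s in (0:ℝ)..t, γ * I0 ≤ ∫ s in (0:ℝ)..t, β * S s * I s := by
      apply intervalIntegral.integral_mono_on ht0 (intervalIntegrable_const)
      · have : ContinuousOn (fun s => β * S s * I s) (uIcc 0 t) := by
          rw [uIcc_of_le ht0]; exact hB.contSI
        exact this.intervalIntegrable
      · intro x hx
        have hSx : γ / β ≤ S x := hc x hx.1
        have hIx : I0 ≤ I x := hIlow x hx.1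
        have hkey : γ ≤ S x * β := (div_le_iff₀ hβ).1 hSx
        have hmm := mul_le_mul hkey hIx hI0.le (by nlinarith : (0:ℝ) ≤ S x * β)
        nlinarith
    have hconst : ∫ s in (0:ℝ)..t, γ * I0 = γ * I0 * t := by
      rw [intervalIntegral.integral_const]; simp [mul_comm]
    have hSt : S t ≤ S0 - γ * I0 * t := by
      rw [hB.eqS t ht0]; rw [hconst] at hintle; linarith
    have ht' : γ * I0 * t = (S0 - γ / β) + γ * I0 := by
      rw [htdef]; field_simp
    have : S t < γ / β := by
      rw [ht'] at hSt
      nlinarith [mul_pos hγ hI0]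
    exact absurd (hc t ht0) (not_le.2 this)
  obtain ⟨t1, ht1, hlt1⟩ := hlt
  have hcont : ContinuousOn S (Icc 0 t1) := hB.contS.mono Icc_subset_Ici_self
  have hsub := intermediate_value_Icc' ht1 hcont
  have hmem : γ / β ∈ Icc (S t1) (S 0) := ⟨hlt1.le, by rw [hB.S_zero]; exact hherd.le⟩
  obtain ⟨Ts, hTsmem, hTseq⟩ := hsub hmem
  exact ⟨Ts, hTsmem.1, hTseq⟩

end Bar


section Locked

variable {β γ S0 I0 T D : ℝ} {S I : ℝ → ℝ}

lemma ubb_intInt (β T T' : ℝ) (hS : ContinuousOn S (Ici 0)) (hI : ContinuousOn I (Ici 0))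
    {a b : ℝ} (ha : 0 ≤ a) (hab : a ≤ b) :
    IntervalIntegrable (fun s => ubb 0 T T' s * β * S s * I s) volume a b := by
  have heq : (fun s => ubb 0 T T' s * β * S s * I s)
      = fun s => ((Icc T T')ᶜ).indicator (fun s => β * S s * I s) s := by
    funext s
    by_cases h : s ∈ Icc T T' <;> simp [ubb, h, Set.indicator_apply]
  rw [heq]
  rw [intervalIntegrable_iff_integrableOn_Ioc_of_le hab]
  have hsub : Icc a b ⊆ Ici (0:ℝ) := fun y hy => le_trans ha hy.1
  have hco : IntegrableOn (fun s => β * S s * I s) (Ioc a b) volume := by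
    apply IntegrableOn.mono_set ?_ Ioc_subset_Icc_self
    exact (((continuousOn_const.mul (hS.mono hsub)).mul (hI.mono hsub))).integrableOn_Icc
  exact hco.indicator (measurableSet_Icc.compl)

lemma eq_before (hsol : IsSol β γ (ubb 0 T (T + D)) S0 I0 S I) (hD : 0 ≤ D) :
    ∀ t ∈ Icc (0:ℝ) T,
      (S t = S0 - ∫ s in (0:ℝ)..t, β * S s * I s) ∧
      (I t = I0 + ∫ s in (0:ℝ)..t, (β * S s * I s - γ * I s)) := by
  obtain ⟨_, _, _, _, hS, hI⟩ := hsol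
  intro t ht
  have hne : ∀ᵐ s : ℝ ∂volume, s ≠ T := by
    rw [MeasureTheory.ae_iff]
    have : {a : ℝ | ¬a ≠ T} = {T} := by ext y; simp
    rw [this]
    exact measure_singleton T
  have hae : ∀ᵐ s : ℝ ∂volume, s ∈ Set.uIoc (0:ℝ) t →
      ubb 0 T (T + D) s * β * S s * I s = β * S s * I s := by
    filter_upwards [hne] with s hs hmem
    rw [uIoc_of_le ht.1] at hmem
    have hsT : s < T := lt_of_le_of_ne (le_trans hmem.2 ht.2) hs
    have : ubb 0 T (T + D) s = 1 := by
      rw [ubb, if_neg]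
      intro hc
      exact absurd hc.1 (not_le.2 hsT)
    rw [this, one_mul]
  constructor
  · rw [hS t ht.1]
    congr 1
    exact intervalIntegral.integral_congr_ae hae
  · rw [hI t ht.1]
    congr 1
    apply intervalIntegral.integral_congr_ae
    filter_upwards [hae] with s hs hmem
    rw [hs hmem]

lemma locked_eqs (hsol : IsSol β γ (ubb 0 T (T + D)) S0 I0 S I) (hT : 0 ≤ T) (hD : 0 ≤ D) :
    (∀ t ∈ Icc T (T + D), S t = S T) ∧
    (∀ t ∈ Icc T (T + D), I t = I T + ∫ s in T..t, -(γ * I s)) := by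
  obtain ⟨_, _, hcS, hcI, hS, hI⟩ := hsol
  set L : ℝ → ℝ := fun s => ubb 0 T (T + D) s * β * S s * I s with hL
  have hintL : ∀ a b : ℝ, 0 ≤ a → a ≤ b → IntervalIntegrable L volume a b :=
    fun a b ha hab => ubb_intInt β T (T + D) hcS hcI ha hab
  have hzero : ∀ t ∈ Icc T (T + D), (∫ s in T..t, L s) = 0 := by
    intro t ht
    have : EqOn L (fun _ => (0:ℝ)) (uIcc T t) := by
      intro s hs
      rw [uIcc_of_le ht.1] at hs
      have hmem : s ∈ Icc T (T + D) := ⟨hs.1, le_trans hs.2 ht.2⟩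
      have hu : ubb 0 T (T + D) s = 0 := by rw [ubb, if_pos hmem]
      simp [hL, hu]
    rw [intervalIntegral.integral_congr this]
    simp
  constructor
  · intro t ht
    have ht0 : 0 ≤ t := le_trans hT ht.1
    have e1 : S t = S0 - ∫ s in (0:ℝ)..t, L s := hS t ht0
    have e2 : S T = S0 - ∫ s in (0:ℝ)..T, L s := hS T hT
    have hsplit : (∫ s in (0:ℝ)..T, L s) + (∫ s in T..t, L s) = ∫ s in (0:ℝ)..t, L s :=
      intervalIntegral.integral_add_adjacent_intervals (hintL 0 T le_rfl hT) (hintL T t hT ht.1)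
    rw [e1, ← hsplit, hzero t ht, e2]
    ring
  · intro t ht
    have ht0 : 0 ≤ t := le_trans hT ht.1
    set K : ℝ → ℝ := fun s => L s - γ * I s with hK
    have hintK : ∀ a b : ℝ, 0 ≤ a → a ≤ b → IntervalIntegrable K volume a b := by
      intro a b ha hab
      apply (hintL a b ha hab).sub
      have hsub : Icc a b ⊆ Ici (0:ℝ) := fun y hy => le_trans ha hy.1
      have : ContinuousOn (fun s => γ * I s) (uIcc a b) := by
        rw [uIcc_of_le hab]; exact continuousOn_const.mul (hcI.mono hsub)
      exact this.intervalIntegrable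
    have e1 : I t = I0 + ∫ s in (0:ℝ)..t, K s := hI t ht0
    have e2 : I T = I0 + ∫ s in (0:ℝ)..T, K s := hI T hT
    have hsplit : (∫ s in (0:ℝ)..T, K s) + (∫ s in T..t, K s) = ∫ s in (0:ℝ)..t, K s :=
      intervalIntegral.integral_add_adjacent_intervals (hintK 0 T le_rfl hT) (hintK T t hT ht.1)
    have htail : (∫ s in T..t, K s) = ∫ s in T..t, -(γ * I s) := by
      apply intervalIntegral.integral_congr
      intro s hs
      rw [uIcc_of_le ht.1] at hs
      have hmem : s ∈ Icc T (T + D) := ⟨hs.1, le_trans hs.2 ht.2⟩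
      have hu : ubb 0 T (T + D) s = 0 := by rw [ubb, if_pos hmem]
      simp [hK, hL, hu]
    rw [e1, ← hsplit, htail, e2]
    ring

lemma locked_I_exp (hsol : IsSol β γ (ubb 0 T (T + D)) S0 I0 S I) (hT : 0 ≤ T)
    (hD : 0 ≤ D) : I (T + D) = Real.exp (-(γ * D)) * I T := by
  have hcI : ContinuousOn I (Ici 0) := hsol.2.2.2.1
  have hIeq := (locked_eqs hsol hT hD).2
  have hsub : Icc T (T + D) ⊆ Ici (0:ℝ) := fun y hy => le_trans hT hy.1
  set F : ℝ → ℝ := fun u => I u * Real.exp (γ * (u - T)) with hF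
  have hFc : ContinuousOn F (Icc T (T + D)) :=
    (hcI.mono hsub).mul
      ((Real.continuous_exp.comp
        (continuous_const.mul (continuous_id.sub continuous_const))).continuousOn)
  have hF' : ∀ x ∈ Ico T (T + D), HasDerivWithinAt F 0 (Ici x) x := by
    intro x hx
    have hI' : HasDerivWithinAt I (-(γ * I x)) (Ici x) x := by
      refine hasDeriv_right_of_eq_integral (c := I T)
        (g := fun s => -(γ * I s)) ?_ hx hIeq
      exact (continuousOn_const.mul (hcI.mono hsub)).neg
    have hlin : HasDerivWithinAt (fun u : ℝ => γ * (u - T)) γ (Ici x) x := by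
      simpa using ((hasDerivWithinAt_id x (Ici x)).sub_const T).const_mul γ
    have hexp : HasDerivWithinAt (fun u => Real.exp (γ * (u - T)))
        (Real.exp (γ * (x - T)) * γ) (Ici x) x := hlin.exp
    have := hI'.mul hexp
    refine this.congr_deriv ?_
    ring
  have hcon := constant_of_has_deriv_right_zero hFc hF'
  have hDD : T ≤ T + D := by linarith
  have h1 := hcon (T + D) ⟨hDD, le_rfl⟩
  have h2 : F T = I T := by simp [hF]
  rw [h2] at h1
  have h3 : F (T + D) = I (T + D) * Real.exp (γ * D) := by
    simp only [hF]
    congr 2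
    ring
  rw [h3] at h1
  have hepos : Real.exp (γ * D) ≠ 0 := (Real.exp_pos _).ne'
  rw [Real.exp_neg]
  field_simp
  rw [mul_comm D γ]
  linarith [h1]

end Locked

end SIRaux

open SIRaux

/-- Let `α = 0` and `D > 0`. Then for every `T ≥ 0`, the cost
`j(T) := Φ_{R₀}(S^T(T+D), I^T(T+D))` satisfies `j(T) = (e^{-γD} - 1)·Ī(T) + c₀`, where
`(S̄, Ī)` is the uncontrolled solution (control `𝟏`) with the same initial data and
`c₀ := S₀ + I₀ - (γ/β)·ln S₀`; consequently `j` is minimized exactly at the time `T*` at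
which `S̄(T*) = S_herd`. -/
theorem sir_cost_total_lockdown
    (β γ S₀ I₀ D : ℝ) (ST IT : ℝ → ℝ → ℝ) (Sb Ib : ℝ → ℝ)
    (hβ : 0 < β) (hγ : 0 < γ) (hR₀ : 1 < β / γ)
    (hS₀ : 0 < S₀) (hI₀ : 0 < I₀) (hSI : S₀ + I₀ ≤ 1) (hS₀herd : γ / β < S₀)
    (hD : 0 < D)
    (hsol : ∀ T, 0 ≤ T → IsSol β γ (ubb 0 T (T + D)) S₀ I₀ (ST T) (IT T))
    (hbar : IsSol β γ (fun _ => 1) S₀ I₀ Sb Ib) :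
    (∀ T, 0 ≤ T →
      Phi (β / γ) (ST T (T + D)) (IT T (T + D)) =
        (Real.exp (-(γ * D)) - 1) * Ib T + (S₀ + I₀ - γ / β * Real.log S₀)) ∧
    (∀ T, 0 ≤ T →
      ((∀ T', 0 ≤ T' →
          Phi (β / γ) (ST T (T + D)) (IT T (T + D)) ≤
            Phi (β / γ) (ST T' (T' + D)) (IT T' (T' + D))) ↔
        Sb T = γ / β)) := by
  have hBar : SIRaux.Bar β γ S₀ I₀ Sb Ib := by
    obtain ⟨h1, h2, h3, h4, h5, h6⟩ := hbar
    refine ⟨h3, h4, ?_, ?_⟩ <;> intro t ht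
    · rw [h5 t ht]
      congr 1
      apply intervalIntegral.integral_congr
      intro s _
      simp
    · rw [h6 t ht]
      congr 1
      apply intervalIntegral.integral_congr
      intro s _
      simp
  -- agreement at time `T`
  have hagree : ∀ T, 0 ≤ T → ST T T = Sb T ∧ IT T T = Ib T := by
    intro T hT
    have hsolT := hsol T hT
    have hbefore := SIRaux.eq_before hsolT hD.le
    have hcST : ContinuousOn (ST T) (Icc 0 T) := hsolT.2.2.1.mono Icc_subset_Ici_self
    have hcIT : ContinuousOn (IT T) (Icc 0 T) := hsolT.2.2.2.1.mono Icc_subset_Ici_self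
    exact SIRaux.sir_eqOn hβ.le hγ.le hT hcST hcIT
      (hBar.contS.mono Icc_subset_Ici_self) (hBar.contI.mono Icc_subset_Ici_self)
      (fun t ht => (hbefore t ht).1) (fun t ht => (hbefore t ht).2)
      (fun t ht => hBar.eqS t ht.1) (fun t ht => hBar.eqI t ht.1)
      T ⟨hT, le_rfl⟩
  have hSTD : ∀ T, 0 ≤ T → ST T (T + D) = Sb T := by
    intro T hT
    have := (SIRaux.locked_eqs (hsol T hT) hT hD.le).1 (T + D) ⟨by linarith, le_rfl⟩
    rw [this, (hagree T hT).1]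
  have hITD : ∀ T, 0 ≤ T → IT T (T + D) = Real.exp (-(γ * D)) * Ib T := by
    intro T hT
    rw [SIRaux.locked_I_exp (hsol T hT) hT hD.le, (hagree T hT).2]
  have part1 : ∀ T, 0 ≤ T →
      Phi (β / γ) (ST T (T + D)) (IT T (T + D)) =
        (Real.exp (-(γ * D)) - 1) * Ib T + (S₀ + I₀ - γ / β * Real.log S₀) := by
    intro T hT
    rw [hSTD T hT, hITD T hT]
    have hφ := hBar.phi_const hβ hS₀ hI₀ T hT
    rw [Phi, ← hφ]
    have h1β : 1 / (β / γ) = γ / β := one_div_div β γ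
    rw [h1β]
    ring
  refine ⟨part1, ?_⟩
  intro T hT
  have he : Real.exp (-(γ * D)) - 1 < 0 := by
    have h1 : Real.exp (-(γ * D)) < 1 := Real.exp_lt_one_iff.2 (by nlinarith)
    linarith
  constructor
  · intro hmin
    obtain ⟨Ts, hTs0, hTseq⟩ := hBar.exists_Tstar hβ hγ hS₀ hI₀ hS₀herd
    have hIle : Ib Ts ≤ Ib T := by
      have h := hmin Ts hTs0
      rw [part1 T hT, part1 Ts hTs0] at h
      by_contra hlt
      push_neg at hlt
      have := mul_lt_mul_of_neg_left hlt he
      linarith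
    rcases lt_trichotomy T Ts with h | h | h
    · exact absurd (hBar.I_lt_of_lt_Tstar hβ hS₀ hI₀ hT h hTseq) (not_lt.2 hIle)
    · rw [h]; exact hTseq
    · exact absurd (hBar.I_lt_of_Tstar_lt hβ hS₀ hI₀ hTs0 h hTseq) (not_lt.2 hIle)
  · intro hside T' hT'
    rw [part1 T hT, part1 T' hT']
    have hIle : Ib T' ≤ Ib T := by
      rcases le_total T' T with h | h
      · exact hBar.I_mono hβ hS₀ hI₀ hT (le_of_eq hside.symm) ⟨hT', h⟩ ⟨hT, le_rfl⟩ h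
      · exact hBar.I_anti hβ hS₀ hI₀ hT (le_of_eq hside) (mem_Ici.2 le_rfl) (mem_Ici.2 h) h
    have := mul_le_mul_of_nonpos_left hIle he.le
    linarith
end
end
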